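/- Once overtaken, always overtaken: Fix an agent i, state s, and parent action a^{P^i}, and let a_+^i ∈ I_+^{s,a^{P^i},i}. For any a ∈ I_0^{s,a^{P^i},i}, if there exists a time t ≥ T₁ (with t > T₀) such that π^{t,i}(a|s,a^{P^i}) ≤ π^{t,i}(a_+^i|s,a^{P^i}), then for all τ ≥ t, π^{τ,i}(a|s,a^{P^i}) ≤ π^{τ,i}(a_+^i|s,a^{P^i}). -/

import Mathlib

set_option linter.unusedSectionVars false
set_option linter.unusedVariables false
set_option linter.unreachableTactic false
set_option linter.unusedTactic false
set_option maxHeartbeats 1000000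


open Filter Topology
open scoped BigOperators Classical

namespace BNPG

variable {S : Type} [Fintype S] [DecidableEq S] [Nonempty S]
variable {N : ℕ} {A : Fin N → Type} [∀ i, Fintype (A i)] [∀ i, DecidableEq (A i)]
  [∀ i, Nonempty (A i)]

/-- Joint actions of all agents. -/
abbrev JointAct (A : Fin N → Type) : Type := (i : Fin N) → A i

/-- Parent actions of agent `i`, given the parent sets `P`. -/
abbrev ParAct (A : Fin N → Type) (P : Fin N → Finset (Fin N)) (i : Fin N) : Type :=
  (j : {x : Fin N // x ∈ P i}) → A j.val

/-- Restriction of a joint action to agent `i`'s parents. -/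
def restr (A : Fin N → Type) (P : Fin N → Finset (Fin N)) (i : Fin N) (a : JointAct A) :
    ParAct A P i := fun j => a j.val

/-- The parent relation forms a DAG: it admits a topological order. -/
def IsDAG (P : Fin N → Finset (Fin N)) : Prop :=
  ∃ ord : Fin N → ℕ, ∀ i : Fin N, ∀ j ∈ P i, ord j < ord i

/-- Joint policies: a map from states to (signed) weights on joint actions. -/
abbrev Pol (S : Type) (A : Fin N → Type) : Type := S → JointAct A → ℝ

/-- `π` is a probability distribution over joint actions in every state. -/
def IsPol (π : Pol S A) : Prop := (∀ s a, 0 ≤ π s a) ∧ ∀ s, ∑ a, π s a = 1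

/-- The transition function is a probability kernel. -/
def IsKernel (Ptr : S → JointAct A → S → ℝ) : Prop :=
  (∀ s a s', 0 ≤ Ptr s a s') ∧ ∀ s a, ∑ s', Ptr s a s' = 1

/-- `μ` is a probability distribution over states. -/
def IsDist (μ : S → ℝ) : Prop := (∀ s, 0 ≤ μ s) ∧ ∑ s, μ s = 1

/-- Distribution of the state at time `t`, starting from initial distribution `ν`
and following joint policy `π` in the Markov game with transitions `Ptr`. -/
noncomputable def visit (Ptr : S → JointAct A → S → ℝ) (π : Pol S A) (ν : S → ℝ) :
    ℕ → S → ℝ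
  | 0 => ν
  | t + 1 => fun s' => ∑ s, ∑ a, visit Ptr π ν t s * π s a * Ptr s a s'

/-- Discounted value `V_π(ν)` of policy `π` started from initial state distribution `ν`. -/
noncomputable def Vval (γ : ℝ) (Ptr : S → JointAct A → S → ℝ) (r : S → JointAct A → ℝ)
    (π : Pol S A) (ν : S → ℝ) : ℝ :=
  ∑' t : ℕ, γ ^ t * ∑ s, ∑ a, visit Ptr π ν t s * π s a * r s a

/-- State value function `V_π(s)`. -/
noncomputable def VS (γ : ℝ) (Ptr : S → JointAct A → S → ℝ) (r : S → JointAct A → ℝ)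
    (π : Pol S A) (s : S) : ℝ :=
  Vval γ Ptr r π (fun s' => if s' = s then 1 else 0)

/-- Action value function `Q_π(s,a)`. -/
noncomputable def Qa (γ : ℝ) (Ptr : S → JointAct A → S → ℝ) (r : S → JointAct A → ℝ)
    (π : Pol S A) (s : S) (a : JointAct A) : ℝ :=
  r s a + γ * ∑ s', Ptr s a s' * VS γ Ptr r π s'

/-- (Unnormalized) discounted state visitation measure `d_ν^π(s)`. -/
noncomputable def dvisit (γ : ℝ) (Ptr : S → JointAct A → S → ℝ) (π : Pol S A)
    (ν : S → ℝ) (s : S) : ℝ :=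
  ∑' t : ℕ, γ ^ t * visit Ptr π ν t s

/-- Tabular softmax parameters for a Bayesian network policy. -/
abbrev Param (S : Type) (A : Fin N → Type) (P : Fin N → Finset (Fin N)) : Type :=
  (i : Fin N) → S → ParAct A P i → A i → ℝ

/-- Local softmax policy of agent `i`: `π^i_{θ^i}(a^i | s, a^{P^i}) ∝ exp θ^i_{s,a^{P^i},a^i}`. -/
noncomputable def locPol (P : Fin N → Finset (Fin N)) (θ : Param S A P) (i : Fin N) (s : S)
    (p : ParAct A P i) (ai : A i) : ℝ :=
  Real.exp (θ i s p ai) / ∑ b, Real.exp (θ i s p b)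

/-- BN joint policy induced by arbitrary local policies: `π(a|s) = ∏ i π^i(a^i|s,a^{P^i})`. -/
noncomputable def bnPolGen (P : Fin N → Finset (Fin N))
    (π : (i : Fin N) → S → ParAct A P i → A i → ℝ) : Pol S A :=
  fun s a => ∏ i, π i s (restr A P i a) (a i)

/-- Tabular softmax BN joint policy. -/
noncomputable def bnPol (P : Fin N → Finset (Fin N)) (θ : Param S A P) : Pol S A :=
  bnPolGen P (fun i => locPol P θ i)

/-- Coordinate basis vector of the parameter space at coordinate `(i, s, p, ai)`. -/
noncomputable def basis (P : Fin N → Finset (Fin N)) (i : Fin N) (s : S) (p : ParAct A P i)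
    (ai : A i) : Param S A P :=
  Pi.single i (fun s' p' a' => if s' = s ∧ p' = p ∧ a' = ai then 1 else 0)

/-- Partial derivative of `f` with respect to the parameter coordinate `(i, s, p, ai)`. -/
noncomputable def pderiv (P : Fin N → Finset (Fin N)) (f : Param S A P → ℝ)
    (θ : Param S A P) (i : Fin N) (s : S) (p : ParAct A P i) (ai : A i) : ℝ :=
  deriv (fun τ : ℝ => f (θ + τ • basis P i s p ai)) 0

/-- The policy gradient `∇_θ V_{π_θ}(μ)`, coordinatewise. -/
noncomputable def gradV (γ : ℝ) (Ptr : S → JointAct A → S → ℝ) (r : S → JointAct A → ℝ)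
    (μ : S → ℝ) (P : Fin N → Finset (Fin N)) (θ : Param S A P) : Param S A P :=
  fun i s p ai => pderiv P (fun θ' => Vval γ Ptr r (bnPol P θ') μ) θ i s p ai

/-- Marginal probability `π^{P^i}(a^{P^i} | s)` of parent action `p` under joint policy `π`. -/
noncomputable def parentMarg (P : Fin N → Finset (Fin N)) (π : Pol S A) (i : Fin N) (s : S)
    (p : ParAct A P i) : ℝ :=
  ∑ a, if restr A P i a = p then π s a else 0

/-- Conditional action value `Q_π(s, a^{P^i}) = E_{a^{-P^i} ∼ π(·|s,a^{P^i})}[Q_π(s,a)]`. -/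
noncomputable def Qpar (γ : ℝ) (Ptr : S → JointAct A → S → ℝ) (r : S → JointAct A → ℝ)
    (P : Fin N → Finset (Fin N)) (π : Pol S A) (i : Fin N) (s : S) (p : ParAct A P i) : ℝ :=
  (∑ a, if restr A P i a = p then π s a * Qa γ Ptr r π s a else 0) / parentMarg P π i s p

/-- Conditional action value `Q_π(s, a^{P^i_+}) = E_{a^{-P^i_+} ∼ π(·|s,a^{P^i},a^i)}[Q_π(s,a)]`. -/
noncomputable def QparPlus (γ : ℝ) (Ptr : S → JointAct A → S → ℝ) (r : S → JointAct A → ℝ)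
    (P : Fin N → Finset (Fin N)) (π : Pol S A) (i : Fin N) (s : S) (p : ParAct A P i)
    (ai : A i) : ℝ :=
  (∑ a, if restr A P i a = p ∧ a i = ai then π s a * Qa γ Ptr r π s a else 0) /
    (∑ a, if restr A P i a = p ∧ a i = ai then π s a else 0)

/-- Advantage `A^i_π(s, a^{P^i}, a^i) = Q_π(s,a^{P^i_+}) − Q_π(s,a^{P^i})`. -/
noncomputable def Adv (γ : ℝ) (Ptr : S → JointAct A → S → ℝ) (r : S → JointAct A → ℝ)
    (P : Fin N → Finset (Fin N)) (π : Pol S A) (i : Fin N) (s : S) (p : ParAct A P i)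
    (ai : A i) : ℝ :=
  QparPlus γ Ptr r P π i s p ai - Qpar γ Ptr r P π i s p

/-- Augmented state visitation `d_μ^π(s, a^{P^i}) = d_μ^π(s) ⬝ π^{P^i}(a^{P^i}|s)`. -/
noncomputable def dAug (γ : ℝ) (Ptr : S → JointAct A → S → ℝ) (P : Fin N → Finset (Fin N))
    (π : Pol S A) (μ : S → ℝ) (i : Fin N) (s : S) (p : ParAct A P i) : ℝ :=
  dvisit γ Ptr π μ s * parentMarg P π i s p

/-- Centered advantage `Ā^{π_θ,i}(s,a) = Q(s,a) − E_{ā^i ∼ π^i(·|s,a^{P^i})} Q(s,ā^i,a^{-i})`. -/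
noncomputable def Abar (γ : ℝ) (Ptr : S → JointAct A → S → ℝ) (r : S → JointAct A → ℝ)
    (P : Fin N → Finset (Fin N)) (θ : Param S A P) (i : Fin N) (s : S) (a : JointAct A) : ℝ :=
  Qa γ Ptr r (bnPol P θ) s a -
    ∑ b : A i, locPol P θ i s (restr A P i a) b *
      Qa γ Ptr r (bnPol P θ) s (Function.update a i b)

/-- `Δ`: the minimal nonzero magnitude of the limiting advantages. -/
noncomputable def Delta (P : Fin N → Finset (Fin N))
    (QplusInf : (i : Fin N) → S → ParAct A P i → A i → ℝ)
    (QmInf : (i : Fin N) → S → ParAct A P i → ℝ) : ℝ :=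
  sInf {x : ℝ | ∃ (i : Fin N) (s : S) (p : ParAct A P i) (ai : A i),
    QplusInf i s p ai - QmInf i s p ≠ 0 ∧ x = |QplusInf i s p ai - QmInf i s p|}

set_option linter.unusedSectionVars false
set_option maxHeartbeats 1000000
set_option linter.unusedVariables false


variable {P : Fin N → Finset (Fin N)}

lemma sum_exp_pos (θ : Param S A P) (i : Fin N) (s : S) (p : ParAct A P i) :
    0 < ∑ b, Real.exp (θ i s p b) :=
  Finset.sum_pos (fun b _ => Real.exp_pos _) Finset.univ_nonempty

lemma locPol_pos (θ : Param S A P) (i : Fin N) (s : S) (p : ParAct A P i) (ai : A i) :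
    0 < locPol P θ i s p ai :=
  div_pos (Real.exp_pos _) (sum_exp_pos θ i s p)

lemma locPol_nonneg (θ : Param S A P) (i : Fin N) (s : S) (p : ParAct A P i) (ai : A i) :
    0 ≤ locPol P θ i s p ai := (locPol_pos θ i s p ai).le

lemma locPol_sum_one (θ : Param S A P) (i : Fin N) (s : S) (p : ParAct A P i) :
    ∑ b, locPol P θ i s p b = 1 := by
  unfold locPol
  rw [← Finset.sum_div]
  exact div_self (ne_of_gt (sum_exp_pos θ i s p))

lemma locPol_le_one (θ : Param S A P) (i : Fin N) (s : S) (p : ParAct A P i) (ai : A i) :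
    locPol P θ i s p ai ≤ 1 := by
  unfold locPol
  rw [div_le_one (sum_exp_pos θ i s p)]
  exact Finset.single_le_sum (fun b _ => (Real.exp_pos _).le) (Finset.mem_univ ai)

lemma locPol_le_iff (θ : Param S A P) (i : Fin N) (s : S) (p : ParAct A P i) (a b : A i) :
    locPol P θ i s p a ≤ locPol P θ i s p b ↔ θ i s p a ≤ θ i s p b := by
  unfold locPol
  rw [div_le_div_iff_of_pos_right (sum_exp_pos θ i s p), Real.exp_le_exp]

/-- Ratio form: `locPol a / locPol b = exp (θ a - θ b)`. -/
lemma locPol_ratio (θ : Param S A P) (i : Fin N) (s : S) (p : ParAct A P i) (a b : A i) :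
    locPol P θ i s p a = locPol P θ i s p b * Real.exp (θ i s p a - θ i s p b) := by
  unfold locPol
  rw [Real.exp_sub]
  field_simp

lemma sum_update_eq (m : Fin N) (F : JointAct A → ℝ) :
    ∑ a : JointAct A, ∑ x : A m, F (Function.update a m x)
      = (Fintype.card (A m) : ℝ) * ∑ a : JointAct A, F a := by
  have hinv : Function.Involutive
      (fun q : JointAct A × A m => (Function.update q.1 m q.2, q.1 m)) := by
    rintro ⟨a, x⟩
    simp [Function.update_idem, Function.update_eq_self]
  have := Equiv.sum_comp hinv.toPerm (fun q : JointAct A × A m => F q.1)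
  simp only [Function.Involutive.coe_toPerm] at this
  calc ∑ a : JointAct A, ∑ x : A m, F (Function.update a m x)
      = ∑ q : JointAct A × A m, F (Function.update q.1 m q.2) := by
        rw [Fintype.sum_prod_type]
    _ = ∑ q : JointAct A × A m, F q.1 := this
    _ = ∑ a : JointAct A, ∑ _x : A m, F a := by rw [Fintype.sum_prod_type]
    _ = (Fintype.card (A m) : ℝ) * ∑ a : JointAct A, F a := by
        simp [Finset.sum_const, Finset.mul_sum, mul_comm]

lemma restr_update (i m : Fin N) (hm : m ∉ P i) (a : JointAct A) (x : A m) :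
    restr A P i (Function.update a m x) = restr A P i a := by
  funext k
  exact Function.update_of_ne (by rintro rfl; exact hm k.2) _ _

/-- Summing out one agent's local softmax against an invariant weight. -/
lemma sum_gmul (θ : Param S A P) (s : S) (m : Fin N) (hmm : m ∉ P m)
    (R : JointAct A → ℝ) (hR : ∀ a x, R (Function.update a m x) = R a) :
    ∑ a : JointAct A, locPol P θ m s (restr A P m a) (a m) * R a
      = (Fintype.card (A m) : ℝ)⁻¹ * ∑ a, R a := by
  have key := sum_update_eq (A := A) m
    (fun a => locPol P θ m s (restr A P m a) (a m) * R a)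
  have h1 : ∀ a : JointAct A,
      (∑ x : A m, locPol P θ m s (restr A P m (Function.update a m x))
        ((Function.update a m x) m) * R (Function.update a m x)) = R a := by
    intro a
    have : ∀ x : A m, locPol P θ m s (restr A P m (Function.update a m x))
        ((Function.update a m x) m) * R (Function.update a m x)
        = locPol P θ m s (restr A P m a) x * R a := by
      intro x
      rw [restr_update m m hmm, Function.update_self, hR]
    rw [Finset.sum_congr rfl (fun x _ => this x), ← Finset.sum_mul, locPol_sum_one, one_mul]
  rw [Finset.sum_congr rfl (fun a _ => h1 a)] at key
  have hcard : (0:ℝ) < (Fintype.card (A m) : ℝ) := by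
    exact_mod_cast Fintype.card_pos
  field_simp
  linarith [key]

/-- Core sum-out lemma: agents in an upward-closed set `T` can be integrated out. -/
lemma sumOut (ord : Fin N → ℕ) (hord : ∀ i : Fin N, ∀ j ∈ P i, ord j < ord i)
    (θ : Param S A P) (s : S) (T : Finset (Fin N))
    (hT : ∀ j ∈ T, ∀ k : Fin N, j ∈ P k → k ∈ T)
    (χ : JointAct A → ℝ) (hχ : ∀ j ∈ T, ∀ a x, χ (Function.update a j x) = χ a) :
    ∑ a : JointAct A, (∏ j, locPol P θ j s (restr A P j a) (a j)) * χ a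
      = (∏ j ∈ T, (Fintype.card (A j) : ℝ))⁻¹ *
        ∑ a : JointAct A, (∏ j ∈ Tᶜ, locPol P θ j s (restr A P j a) (a j)) * χ a := by
  classical
  induction T using Finset.strongInduction generalizing χ with
  | _ T IH =>
    rcases T.eq_empty_or_nonempty with rfl | hne
    · simp
    · obtain ⟨m, hmT, hmin⟩ := T.exists_min_image ord hne
      have hmm : m ∉ P m := fun h => lt_irrefl _ (hord m m h)
      set T' := T.erase m with hT'def
      have hT'sub : T' ⊂ T := Finset.erase_ssubset hmT
      have hT'closed : ∀ j ∈ T', ∀ k : Fin N, j ∈ P k → k ∈ T' := by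
        intro j hj k hk
        have hjT : j ∈ T := Finset.mem_of_mem_erase hj
        have hkT : k ∈ T := hT j hjT k hk
        refine Finset.mem_erase.2 ⟨?_, hkT⟩
        rintro rfl
        exact absurd (hmin j hjT) (not_le.2 (hord k j hk))
      have hχ' : ∀ j ∈ T', ∀ a x, χ (Function.update a j x) = χ a :=
        fun j hj => hχ j (Finset.mem_of_mem_erase hj)
      have hIH := IH T' hT'sub hT'closed χ hχ'
      have hcompl : T'ᶜ = insert m Tᶜ := by
        rw [hT'def, Finset.compl_erase]
      have hmnotc : m ∉ Tᶜ := by simp [hmT]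
      have hsum2 : ∑ a : JointAct A, (∏ j ∈ T'ᶜ, locPol P θ j s (restr A P j a) (a j)) * χ a
          = (Fintype.card (A m) : ℝ)⁻¹ *
            ∑ a : JointAct A, (∏ j ∈ Tᶜ, locPol P θ j s (restr A P j a) (a j)) * χ a := by
        have hRinv : ∀ (a : JointAct A) (x : A m),
            (∏ j ∈ Tᶜ, locPol P θ j s (restr A P j (Function.update a m x))
              ((Function.update a m x) j)) * χ (Function.update a m x)
            = (∏ j ∈ Tᶜ, locPol P θ j s (restr A P j a) (a j)) * χ a := by
          intro a x
          rw [hχ m hmT]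
          congr 1
          refine Finset.prod_congr rfl (fun j hj => ?_)
          have hjm : j ≠ m := fun h => hmnotc (h ▸ hj)
          have hmPj : m ∉ P j := by
            intro hmem
            have : j ∈ T := hT m hmT j hmem
            simp [Finset.mem_compl] at hj
            exact hj this
          rw [restr_update j m hmPj, Function.update_of_ne hjm]
        have := sum_gmul θ s m hmm
          (fun a => (∏ j ∈ Tᶜ, locPol P θ j s (restr A P j a) (a j)) * χ a)
          (fun a x => hRinv a x)
        calc ∑ a : JointAct A, (∏ j ∈ T'ᶜ, locPol P θ j s (restr A P j a) (a j)) * χ a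
            = ∑ a : JointAct A, locPol P θ m s (restr A P m a) (a m) *
                ((∏ j ∈ Tᶜ, locPol P θ j s (restr A P j a) (a j)) * χ a) := by
              refine Finset.sum_congr rfl (fun a _ => ?_)
              rw [hcompl, Finset.prod_insert hmnotc, mul_assoc]
          _ = (Fintype.card (A m) : ℝ)⁻¹ *
                ∑ a, (∏ j ∈ Tᶜ, locPol P θ j s (restr A P j a) (a j)) * χ a := this
      rw [hIH, hsum2, ← mul_assoc]
      congr 1
      rw [← Finset.mul_prod_erase T _ hmT, ← hT'def, mul_inv]
      ring

lemma bnPol_nonneg (θ : Param S A P) (s : S) (a : JointAct A) : 0 ≤ bnPol P θ s a := by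
  unfold bnPol bnPolGen
  exact Finset.prod_nonneg (fun j _ => locPol_nonneg θ j s _ _)

lemma bnPol_pos (θ : Param S A P) (s : S) (a : JointAct A) : 0 < bnPol P θ s a := by
  unfold bnPol bnPolGen
  exact Finset.prod_pos (fun j _ => locPol_pos θ j s _ _)

lemma bnPol_sum_one (hDAG : IsDAG P) (θ : Param S A P) (s : S) :
    ∑ a : JointAct A, bnPol P θ s a = 1 := by
  obtain ⟨ord, hord⟩ := hDAG
  have hthis := sumOut ord hord θ s Finset.univ (by simp) (fun _ => 1) (by simp)
  simp only [mul_one, Finset.compl_univ, Finset.prod_empty, one_mul] at hthis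
  have hpos : (0:ℝ) < ∏ j, (Fintype.card (A j) : ℝ) :=
    Finset.prod_pos (fun j _ => by exact_mod_cast (Fintype.card_pos : 0 < Fintype.card (A j)))
  have hcard : ∑ a : JointAct A, (1:ℝ) = ∏ j, (Fintype.card (A j) : ℝ) := by
    rw [Finset.sum_const]
    simp [Fintype.card_pi]
  rw [hcard, inv_mul_cancel₀ hpos.ne'] at hthis
  exact hthis

lemma bnPol_isPol (hDAG : IsDAG P) (θ : Param S A P) : IsPol (bnPol P θ) :=
  ⟨fun s a => bnPol_nonneg θ s a, fun s => bnPol_sum_one hDAG θ s⟩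

/-- BN factorization: the probability that agent `i` plays `x` and its parents play `p`
factors as `parentMarg · locPol`. -/
lemma den_factor (hDAG : IsDAG P) (θ : Param S A P) (i : Fin N) (s : S)
    (p : ParAct A P i) (x : A i) :
    (∑ a : JointAct A, if restr A P i a = p ∧ a i = x then bnPol P θ s a else 0)
      = parentMarg P (bnPol P θ) i s p * locPol P θ i s p x := by
  classical
  obtain ⟨ord, hord⟩ := hDAG
  have hii : i ∉ P i := fun h => lt_irrefl _ (hord i i h)
  set T : Finset (Fin N) := Finset.univ.filter (fun j => ord i < ord j) with hT
  have hTclosed : ∀ j ∈ T, ∀ k : Fin N, j ∈ P k → k ∈ T := by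
    intro j hj k hk
    simp only [hT, Finset.mem_filter, Finset.mem_univ, true_and] at hj ⊢
    exact hj.trans (hord k j hk)
  have hmemT : ∀ j ∈ T, j ≠ i ∧ j ∉ P i := by
    intro j hj
    simp only [hT, Finset.mem_filter, Finset.mem_univ, true_and] at hj
    exact ⟨fun h => lt_irrefl _ (h ▸ hj), fun h => (lt_asymm hj) (hord i j h)⟩
  have hiD : i ∈ Tᶜ := by
    simp [hT, Finset.mem_compl]
  -- Den as a function of the action value y
  set Den : A i → ℝ := fun y =>
    ∑ a : JointAct A, if restr A P i a = p ∧ a i = y then bnPol P θ s a else 0 with hDen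
  set g : Fin N → JointAct A → ℝ := fun j a => locPol P θ j s (restr A P j a) (a j) with hg
  set D := Tᶜ with hD
  -- the "downstream-integrated" sum, independent of y
  set S0 : ℝ := ∑ a : JointAct A, (∏ j ∈ D.erase i, g j a) *
    (if restr A P i a = p then (1:ℝ) else 0) with hS0
  have hstep : ∀ y : A i, Den y =
      (∏ j ∈ T, (Fintype.card (A j) : ℝ))⁻¹ * ((Fintype.card (A i) : ℝ))⁻¹ *
        S0 * locPol P θ i s p y := by
    intro y
    set χ : JointAct A → ℝ := fun a => if restr A P i a = p ∧ a i = y then (1:ℝ) else 0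
      with hχdef
    have hχ : ∀ j ∈ T, ∀ a x', χ (Function.update a j x') = χ a := by
      intro j hj a x'
      obtain ⟨hji, hjP⟩ := hmemT j hj
      simp only [hχdef]
      rw [restr_update i j hjP, Function.update_of_ne (Ne.symm hji)]
    have h1 : Den y = ∑ a : JointAct A, (∏ j, g j a) * χ a := by
      refine Finset.sum_congr rfl (fun a _ => ?_)
      simp only [hχdef, hg]
      by_cases hc : restr A P i a = p ∧ a i = y
      · simp [hc, bnPol, bnPolGen]
      · simp [hc]
    have h2 := sumOut ord hord θ s T hTclosed χ hχ
    -- peel off agent i's factor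
    have h3 : ∑ a : JointAct A, (∏ j ∈ D, g j a) * χ a
        = locPol P θ i s p y * ∑ a : JointAct A, (∏ j ∈ D.erase i, g j a) * χ a := by
      rw [Finset.mul_sum]
      refine Finset.sum_congr rfl (fun a _ => ?_)
      rw [← Finset.mul_prod_erase D _ hiD]
      by_cases hc : restr A P i a = p ∧ a i = y
      · simp only [hχdef, if_pos hc]
        rw [hg]
        simp only [hc.1, hc.2]
        ring
      · simp [hχdef, if_neg hc]
    -- the remaining sum is independent of y
    have h4 : ∑ a : JointAct A, (∏ j ∈ D.erase i, g j a) * χ a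
        = ((Fintype.card (A i) : ℝ))⁻¹ * S0 := by
      have key := sum_update_eq (A := A) i
        (fun a => (∏ j ∈ D.erase i, g j a) * χ a)
      have hinner : ∀ a : JointAct A,
          (∑ z : A i, (∏ j ∈ (D.erase i), g j (Function.update a i z)) *
            χ (Function.update a i z))
          = (∏ j ∈ D.erase i, g j a) * (if restr A P i a = p then (1:ℝ) else 0) := by
        intro a
        have hprod : ∀ z : A i, (∏ j ∈ D.erase i, g j (Function.update a i z))
            = ∏ j ∈ D.erase i, g j a := by
          intro z
          refine Finset.prod_congr rfl (fun j hj => ?_)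
          have hji : j ≠ i := (Finset.mem_erase.1 hj).1
          have hiPj : i ∉ P j := by
            intro hmem
            have hjT : j ∈ T := by
              simp only [hT, Finset.mem_filter, Finset.mem_univ, true_and]
              exact hord j i hmem
            have hjD : j ∈ Tᶜ := (Finset.mem_erase.1 hj).2
            rw [Finset.mem_compl] at hjD
            exact hjD hjT
          simp only [g]
          rw [restr_update j i hiPj, Function.update_of_ne hji]
        have hχz : ∀ z : A i, χ (Function.update a i z)
            = if restr A P i a = p ∧ z = y then (1:ℝ) else 0 := by
          intro z
          simp only [hχdef]
          rw [restr_update i i hii, Function.update_self]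
        calc (∑ z : A i, (∏ j ∈ (D.erase i), g j (Function.update a i z)) *
              χ (Function.update a i z))
            = ∑ z : A i, (∏ j ∈ D.erase i, g j a) *
              (if restr A P i a = p ∧ z = y then (1:ℝ) else 0) := by
              refine Finset.sum_congr rfl (fun z _ => ?_)
              rw [hprod z, hχz z]
          _ = (∏ j ∈ D.erase i, g j a) * (if restr A P i a = p then (1:ℝ) else 0) := by
              rw [← Finset.mul_sum]
              congr 1
              by_cases hrp : restr A P i a = p
              · simp [hrp]
              · simp [hrp]
      rw [Finset.sum_congr rfl (fun a _ => hinner a)] at key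
      have hcpos : (0:ℝ) < (Fintype.card (A i) : ℝ) := by exact_mod_cast Fintype.card_pos
      have hgoal : S0 = (Fintype.card (A i) : ℝ) *
          ∑ a : JointAct A, (∏ j ∈ D.erase i, g j a) * χ a := by
        rw [hS0]; exact key
      rw [hgoal, inv_mul_cancel_left₀ hcpos.ne']
    rw [h1, h2, ← hD, h3, h4]
    ring
  -- sum over y to identify the constant with parentMarg
  have hmargsum : parentMarg P (bnPol P θ) i s p = ∑ y : A i, Den y := by
    rw [parentMarg, Finset.sum_comm]
    refine Finset.sum_congr rfl (fun a _ => ?_)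
    by_cases hrp : restr A P i a = p
    · simp [hrp]
    · simp [hrp]
  have hK : parentMarg P (bnPol P θ) i s p
      = (∏ j ∈ T, (Fintype.card (A j) : ℝ))⁻¹ * ((Fintype.card (A i) : ℝ))⁻¹ * S0 := by
    rw [hmargsum, Finset.sum_congr rfl (fun y _ => hstep y), ← Finset.mul_sum,
      locPol_sum_one, mul_one]
  show Den x = _
  rw [hstep x, hK]

section MDP

variable {γ : ℝ} {Ptr : S → JointAct A → S → ℝ} {r : S → JointAct A → ℝ} {π : Pol S A}
variable {ν : S → ℝ}

/-- Dirac distribution. -/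
noncomputable def dirac (s : S) : S → ℝ := fun s' => if s' = s then 1 else 0

lemma dirac_isDist (s : S) : IsDist (dirac s) := by
  constructor
  · intro s'; unfold dirac; split <;> norm_num
  · simp [dirac]

lemma VS_eq_Vval_dirac (s : S) : VS γ Ptr r π s = Vval γ Ptr r π (dirac s) := rfl

lemma visit_nonneg (hPtr : IsKernel Ptr) (hπ : IsPol π) (hν : ∀ s, 0 ≤ ν s) :
    ∀ t s, 0 ≤ visit Ptr π ν t s := by
  intro t
  induction t with
  | zero => exact hν
  | succ t ih =>
    intro s'
    refine Finset.sum_nonneg (fun s _ => Finset.sum_nonneg (fun a _ => ?_))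
    exact mul_nonneg (mul_nonneg (ih s) (hπ.1 s a)) (hPtr.1 s a s')

lemma visit_sum_one (hPtr : IsKernel Ptr) (hπ : IsPol π) (hν : IsDist ν) :
    ∀ t, ∑ s, visit Ptr π ν t s = 1 := by
  intro t
  induction t with
  | zero => exact hν.2
  | succ t ih =>
    show ∑ s', ∑ s, ∑ a, visit Ptr π ν t s * π s a * Ptr s a s' = 1
    rw [Finset.sum_comm]
    calc ∑ s, ∑ s', ∑ a, visit Ptr π ν t s * π s a * Ptr s a s'
        = ∑ s, visit Ptr π ν t s := by
          refine Finset.sum_congr rfl (fun s _ => ?_)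
          rw [Finset.sum_comm]
          calc ∑ a, ∑ s', visit Ptr π ν t s * π s a * Ptr s a s'
              = ∑ a, visit Ptr π ν t s * π s a := by
                refine Finset.sum_congr rfl (fun a _ => ?_)
                rw [← Finset.mul_sum, hPtr.2 s a, mul_one]
            _ = visit Ptr π ν t s := by rw [← Finset.mul_sum, hπ.2 s, mul_one]
      _ = 1 := ih

lemma visit_le_one (hPtr : IsKernel Ptr) (hπ : IsPol π) (hν : IsDist ν) (t : ℕ) (s : S) :
    visit Ptr π ν t s ≤ 1 := by
  rw [← visit_sum_one hPtr hπ hν t]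
  exact Finset.single_le_sum (fun s' _ => visit_nonneg hPtr hπ hν.1 t s') (Finset.mem_univ s)

/-- The expected one-step reward at time `t` lies in `[rmin, rmax]`. -/
lemma inner_le (hPtr : IsKernel Ptr) (hπ : IsPol π) (hν : IsDist ν) {rmax : ℝ}
    (hr : ∀ s a, r s a ≤ rmax) (t : ℕ) :
    ∑ s, ∑ a, visit Ptr π ν t s * π s a * r s a ≤ rmax := by
  have h1 : ∑ s, ∑ a, visit Ptr π ν t s * π s a * r s a
      ≤ ∑ s, ∑ a, visit Ptr π ν t s * π s a * rmax := by
    refine Finset.sum_le_sum (fun s _ => Finset.sum_le_sum (fun a _ => ?_))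
    exact mul_le_mul_of_nonneg_left (hr s a)
      (mul_nonneg (visit_nonneg hPtr hπ hν.1 t s) (hπ.1 s a))
  refine h1.trans ?_
  have : ∑ s, ∑ a, visit Ptr π ν t s * π s a * rmax = rmax := by
    calc ∑ s, ∑ a, visit Ptr π ν t s * π s a * rmax
        = ∑ s, visit Ptr π ν t s * rmax := by
          refine Finset.sum_congr rfl (fun s _ => ?_)
          calc ∑ a, visit Ptr π ν t s * π s a * rmax
              = (∑ a, π s a) * (visit Ptr π ν t s * rmax) := by
                rw [Finset.sum_mul]; refine Finset.sum_congr rfl (fun a _ => by ring)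
            _ = visit Ptr π ν t s * rmax := by rw [hπ.2 s, one_mul]
      _ = (∑ s, visit Ptr π ν t s) * rmax := by rw [Finset.sum_mul]
      _ = rmax := by rw [visit_sum_one hPtr hπ hν, one_mul]
  rw [this]

lemma inner_ge (hPtr : IsKernel Ptr) (hπ : IsPol π) (hν : IsDist ν) {rmin : ℝ}
    (hr : ∀ s a, rmin ≤ r s a) (t : ℕ) :
    rmin ≤ ∑ s, ∑ a, visit Ptr π ν t s * π s a * r s a := by
  have := inner_le (r := fun s a => -(r s a)) hPtr hπ hν (rmax := -rmin)
    (fun s a => neg_le_neg (hr s a)) t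
  have h2 : ∑ s, ∑ a, visit Ptr π ν t s * π s a * -(r s a)
      = -∑ s, ∑ a, visit Ptr π ν t s * π s a * r s a := by
    rw [← Finset.sum_neg_distrib]
    refine Finset.sum_congr rfl (fun s _ => ?_)
    rw [← Finset.sum_neg_distrib]
    exact Finset.sum_congr rfl (fun a _ => by ring)
  rw [h2] at this
  linarith

lemma summable_geom_mul (hγ0 : 0 ≤ γ) (hγ1 : γ < 1) {f : ℕ → ℝ} {C : ℝ}
    (hf : ∀ t, |f t| ≤ C) : Summable (fun t => γ ^ t * f t) := by
  refine Summable.of_norm_bounded (g := fun t => C * γ ^ t)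
    ((summable_geometric_of_lt_one hγ0 hγ1).mul_left C) (fun t => ?_)
  rw [Real.norm_eq_abs, abs_mul, abs_pow, abs_of_nonneg hγ0]
  calc γ ^ t * |f t| ≤ γ ^ t * C :=
        mul_le_mul_of_nonneg_left (hf t) (pow_nonneg hγ0 t)
    _ = C * γ ^ t := mul_comm _ _

lemma tsum_le_geom (hγ0 : 0 ≤ γ) (hγ1 : γ < 1) {f : ℕ → ℝ} {C : ℝ}
    (hsum : Summable f) (hub : ∀ t, f t ≤ γ ^ t * C) : ∑' t, f t ≤ C * (1 - γ)⁻¹ := by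
  have h1 : ∑' t : ℕ, γ ^ t * C = C * (1 - γ)⁻¹ := by
    rw [tsum_mul_right, tsum_geometric_of_lt_one hγ0 hγ1, mul_comm]
  rw [← h1]
  exact Summable.tsum_le_tsum hub hsum ((summable_geometric_of_lt_one hγ0 hγ1).mul_right C)

lemma geom_le_tsum (hγ0 : 0 ≤ γ) (hγ1 : γ < 1) {f : ℕ → ℝ} {C : ℝ}
    (hsum : Summable f) (hlb : ∀ t, γ ^ t * C ≤ f t) : C * (1 - γ)⁻¹ ≤ ∑' t, f t := by
  have h1 : ∑' t : ℕ, γ ^ t * C = C * (1 - γ)⁻¹ := by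
    rw [tsum_mul_right, tsum_geometric_of_lt_one hγ0 hγ1, mul_comm]
  rw [← h1]
  exact Summable.tsum_le_tsum hlb ((summable_geometric_of_lt_one hγ0 hγ1).mul_right C) hsum

variable {rmin rmax : ℝ}

lemma rbound (hr : ∀ s a, rmin ≤ r s a ∧ r s a ≤ rmax) (hPtr : IsKernel Ptr)
    (hπ : IsPol π) (hν : IsDist ν) (t : ℕ) :
    |∑ s, ∑ a, visit Ptr π ν t s * π s a * r s a| ≤ max |rmin| |rmax| := by
  rw [abs_le]
  constructor
  · have := inner_ge hPtr hπ hν (fun s a => (hr s a).1) t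
    have h2 : -max |rmin| |rmax| ≤ rmin := by
      have := neg_abs_le rmin
      have h3 : |rmin| ≤ max |rmin| |rmax| := le_max_left _ _
      linarith
    linarith
  · have := inner_le hPtr hπ hν (fun s a => (hr s a).2) t
    have h2 : rmax ≤ max |rmin| |rmax| := (le_abs_self rmax).trans (le_max_right _ _)
    linarith

lemma Vval_summable (hγ0 : 0 ≤ γ) (hγ1 : γ < 1) (hPtr : IsKernel Ptr)
    (hr : ∀ s a, rmin ≤ r s a ∧ r s a ≤ rmax) (hπ : IsPol π) (hν : IsDist ν) :
    Summable (fun t => γ ^ t * ∑ s, ∑ a, visit Ptr π ν t s * π s a * r s a) :=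
  summable_geom_mul hγ0 hγ1 (fun t => rbound hr hPtr hπ hν t)

lemma Vval_le (hγ0 : 0 ≤ γ) (hγ1 : γ < 1) (hPtr : IsKernel Ptr)
    (hr : ∀ s a, rmin ≤ r s a ∧ r s a ≤ rmax) (hπ : IsPol π) (hν : IsDist ν) :
    Vval γ Ptr r π ν ≤ rmax * (1 - γ)⁻¹ := by
  refine tsum_le_geom hγ0 hγ1 (Vval_summable hγ0 hγ1 hPtr hr hπ hν) (fun t => ?_)
  exact mul_le_mul_of_nonneg_left (inner_le hPtr hπ hν (fun s a => (hr s a).2) t)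
    (pow_nonneg hγ0 t)

lemma Vval_ge (hγ0 : 0 ≤ γ) (hγ1 : γ < 1) (hPtr : IsKernel Ptr)
    (hr : ∀ s a, rmin ≤ r s a ∧ r s a ≤ rmax) (hπ : IsPol π) (hν : IsDist ν) :
    rmin * (1 - γ)⁻¹ ≤ Vval γ Ptr r π ν := by
  refine geom_le_tsum hγ0 hγ1 (Vval_summable hγ0 hγ1 hPtr hr hπ hν) (fun t => ?_)
  exact mul_le_mul_of_nonneg_left (inner_ge hPtr hπ hν (fun s a => (hr s a).1) t)
    (pow_nonneg hγ0 t)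

lemma VS_bounds (hγ0 : 0 ≤ γ) (hγ1 : γ < 1) (hPtr : IsKernel Ptr)
    (hr : ∀ s a, rmin ≤ r s a ∧ r s a ≤ rmax) (hπ : IsPol π) (s : S) :
    rmin * (1 - γ)⁻¹ ≤ VS γ Ptr r π s ∧ VS γ Ptr r π s ≤ rmax * (1 - γ)⁻¹ := by
  rw [VS_eq_Vval_dirac]
  exact ⟨Vval_ge hγ0 hγ1 hPtr hr hπ (dirac_isDist s),
    Vval_le hγ0 hγ1 hPtr hr hπ (dirac_isDist s)⟩

lemma Qa_bounds (hγ0 : 0 ≤ γ) (hγ1 : γ < 1) (hPtr : IsKernel Ptr)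
    (hr : ∀ s a, rmin ≤ r s a ∧ r s a ≤ rmax) (hπ : IsPol π) (s : S) (a : JointAct A) :
    rmin * (1 - γ)⁻¹ ≤ Qa γ Ptr r π s a ∧ Qa γ Ptr r π s a ≤ rmax * (1 - γ)⁻¹ := by
  have hpos : (0:ℝ) < 1 - γ := by linarith
  have hsum : ∀ C, (∀ s', C ≤ VS γ Ptr r π s') →
      C ≤ ∑ s', Ptr s a s' * VS γ Ptr r π s' → True := fun _ _ _ => trivial
  have hup : ∑ s', Ptr s a s' * VS γ Ptr r π s' ≤ rmax * (1 - γ)⁻¹ := by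
    calc ∑ s', Ptr s a s' * VS γ Ptr r π s'
        ≤ ∑ s', Ptr s a s' * (rmax * (1 - γ)⁻¹) := by
          refine Finset.sum_le_sum (fun s' _ => ?_)
          exact mul_le_mul_of_nonneg_left ((VS_bounds hγ0 hγ1 hPtr hr hπ s').2)
            (hPtr.1 s a s')
      _ = rmax * (1 - γ)⁻¹ := by rw [← Finset.sum_mul, hPtr.2 s a, one_mul]
  have hlo : rmin * (1 - γ)⁻¹ ≤ ∑ s', Ptr s a s' * VS γ Ptr r π s' := by
    calc rmin * (1 - γ)⁻¹ = ∑ s', Ptr s a s' * (rmin * (1 - γ)⁻¹) := by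
          rw [← Finset.sum_mul, hPtr.2 s a, one_mul]
      _ ≤ ∑ s', Ptr s a s' * VS γ Ptr r π s' := by
          refine Finset.sum_le_sum (fun s' _ => ?_)
          exact mul_le_mul_of_nonneg_left ((VS_bounds hγ0 hγ1 hPtr hr hπ s').1)
            (hPtr.1 s a s')
  constructor
  · have h1 : rmin + γ * (rmin * (1 - γ)⁻¹) = rmin * (1 - γ)⁻¹ := by
      field_simp
      ring
    unfold Qa
    have := mul_le_mul_of_nonneg_left hlo hγ0
    have h2 := (hr s a).1
    linarith
  · have h1 : rmax + γ * (rmax * (1 - γ)⁻¹) = rmax * (1 - γ)⁻¹ := by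
      field_simp
      ring
    unfold Qa
    have := mul_le_mul_of_nonneg_left hup hγ0
    have h2 := (hr s a).2
    linarith

lemma dvisit_nonneg (hγ0 : 0 ≤ γ) (hγ1 : γ < 1) (hPtr : IsKernel Ptr) (hπ : IsPol π)
    (hν : IsDist ν) (s : S) : 0 ≤ dvisit γ Ptr π ν s :=
  tsum_nonneg (fun t => mul_nonneg (pow_nonneg hγ0 t) (visit_nonneg hPtr hπ hν.1 t s))

lemma dvisit_summable (hγ0 : 0 ≤ γ) (hγ1 : γ < 1) (hPtr : IsKernel Ptr) (hπ : IsPol π)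
    (hν : IsDist ν) (s : S) : Summable (fun t => γ ^ t * visit Ptr π ν t s) :=
  summable_geom_mul hγ0 hγ1 (fun t => by
    rw [abs_of_nonneg (visit_nonneg hPtr hπ hν.1 t s)]
    exact visit_le_one hPtr hπ hν t s)

lemma dvisit_le (hγ0 : 0 ≤ γ) (hγ1 : γ < 1) (hPtr : IsKernel Ptr) (hπ : IsPol π)
    (hν : IsDist ν) (s : S) : dvisit γ Ptr π ν s ≤ (1 - γ)⁻¹ := by
  have := tsum_le_geom hγ0 hγ1 (C := 1) (dvisit_summable hγ0 hγ1 hPtr hπ hν s)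
    (fun t => by
      have h := mul_le_mul_of_nonneg_left (visit_le_one hPtr hπ hν t s) (pow_nonneg hγ0 t)
      rw [mul_one] at h
      simpa using h)
  rwa [one_mul] at this

end MDP

section SumHelpers

lemma sum_rot3 {α β χ : Type} [Fintype α] [Fintype β] [Fintype χ] (f : α → β → χ → ℝ) :
    ∑ x, ∑ y, ∑ z, f x y z = ∑ z, ∑ x, ∑ y, f x y z := by
  calc ∑ x, ∑ y, ∑ z, f x y z = ∑ x, ∑ z, ∑ y, f x y z :=
        Finset.sum_congr rfl (fun x _ => Finset.sum_comm)
    _ = ∑ z, ∑ x, ∑ y, f x y z := Finset.sum_comm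

lemma sum_rot3' {α β χ : Type} [Fintype α] [Fintype β] [Fintype χ] (f : α → β → χ → ℝ) :
    ∑ x, ∑ y, ∑ z, f x y z = ∑ y, ∑ z, ∑ x, f x y z := by
  rw [sum_rot3 f, sum_rot3 (fun z x y => f x y z)]

lemma sum_rot4 {α β χ δ : Type} [Fintype α] [Fintype β] [Fintype χ] [Fintype δ]
    (f : α → β → χ → δ → ℝ) :
    ∑ x, ∑ y, ∑ z, ∑ w, f x y z w = ∑ z, ∑ w, ∑ x, ∑ y, f x y z w := by
  calc ∑ x, ∑ y, ∑ z, ∑ w, f x y z w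
      = ∑ x, ∑ z, ∑ y, ∑ w, f x y z w :=
        Finset.sum_congr rfl (fun x _ => Finset.sum_comm)
    _ = ∑ z, ∑ x, ∑ y, ∑ w, f x y z w := Finset.sum_comm
    _ = ∑ z, ∑ w, ∑ x, ∑ y, f x y z w :=
        Finset.sum_congr rfl (fun z _ => sum_rot3 _)

lemma mul_sum2 {α β : Type} [Fintype α] [Fintype β] (c : ℝ) (f : α → β → ℝ) :
    ∑ x, ∑ y, c * f x y = c * ∑ x, ∑ y, f x y := by
  rw [Finset.mul_sum]
  exact Finset.sum_congr rfl (fun x _ => (Finset.mul_sum _ _ _).symm)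

end SumHelpers

section MDP2

variable {γ : ℝ} {Ptr : S → JointAct A → S → ℝ} {r : S → JointAct A → ℝ} {π : Pol S A}
variable {ν : S → ℝ} {rmin rmax : ℝ}

lemma visit_linear : ∀ (t : ℕ) (s : S),
    visit Ptr π ν t s = ∑ s0, ν s0 * visit Ptr π (dirac s0) t s := by
  intro t
  induction t with
  | zero =>
    intro s
    show ν s = ∑ s0, ν s0 * dirac s0 s
    unfold dirac
    simp only [mul_ite, mul_one, mul_zero]
    rw [Finset.sum_ite_eq Finset.univ s ν]
    simp
  | succ t ih =>
    intro s'
    show ∑ s, ∑ a, visit Ptr π ν t s * π s a * Ptr s a s' = _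
    calc ∑ s, ∑ a, visit Ptr π ν t s * π s a * Ptr s a s'
        = ∑ s, ∑ a, ∑ s0, ν s0 * (visit Ptr π (dirac s0) t s * π s a * Ptr s a s') := by
          refine Finset.sum_congr rfl (fun s _ => Finset.sum_congr rfl (fun a _ => ?_))
          rw [ih s, Finset.sum_mul, Finset.sum_mul]
          exact Finset.sum_congr rfl (fun s0 _ => by ring)
      _ = ∑ s0, ∑ s, ∑ a, ν s0 * (visit Ptr π (dirac s0) t s * π s a * Ptr s a s') :=
          sum_rot3 _
      _ = ∑ s0, ν s0 * visit Ptr π (dirac s0) (t + 1) s' := by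
          refine Finset.sum_congr rfl (fun s0 _ => ?_)
          rw [mul_sum2]
          rfl

lemma visit_front : ∀ (t : ℕ) (s s' : S),
    visit Ptr π (dirac s) (t + 1) s'
      = ∑ a, ∑ s1, π s a * Ptr s a s1 * visit Ptr π (dirac s1) t s' := by
  intro t
  induction t with
  | zero =>
    intro s s'
    show ∑ s0, ∑ a, dirac s s0 * π s0 a * Ptr s0 a s'
        = ∑ a, ∑ s1, π s a * Ptr s a s1 * dirac s1 s'
    unfold dirac
    rw [Finset.sum_comm]
    simp [ite_mul, mul_ite]
  | succ t ih =>
    intro s s'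
    show ∑ s'', ∑ a'', visit Ptr π (dirac s) (t + 1) s'' * π s'' a'' * Ptr s'' a'' s' = _
    calc ∑ s'', ∑ a'', visit Ptr π (dirac s) (t + 1) s'' * π s'' a'' * Ptr s'' a'' s'
        = ∑ s'', ∑ a'', ∑ a, ∑ s1, π s a * Ptr s a s1 *
            (visit Ptr π (dirac s1) t s'' * π s'' a'' * Ptr s'' a'' s') := by
          refine Finset.sum_congr rfl (fun s'' _ => Finset.sum_congr rfl (fun a'' _ => ?_))
          rw [ih s s'']
          simp only [Finset.sum_mul]
          exact Finset.sum_congr rfl (fun a _ => Finset.sum_congr rfl (fun s1 _ => by ring))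
      _ = ∑ a, ∑ s1, ∑ s'', ∑ a'', π s a * Ptr s a s1 *
            (visit Ptr π (dirac s1) t s'' * π s'' a'' * Ptr s'' a'' s') := sum_rot4 _
      _ = ∑ a, ∑ s1, π s a * Ptr s a s1 * visit Ptr π (dirac s1) (t + 1) s' := by
          refine Finset.sum_congr rfl (fun a _ => Finset.sum_congr rfl (fun s1 _ => ?_))
          rw [mul_sum2]
          rfl

lemma Vval_linear (hγ0 : 0 ≤ γ) (hγ1 : γ < 1) (hPtr : IsKernel Ptr)
    (hr : ∀ s a, rmin ≤ r s a ∧ r s a ≤ rmax) (hπ : IsPol π) (hν : IsDist ν) :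
    Vval γ Ptr r π ν = ∑ s0, ν s0 * VS γ Ptr r π s0 := by
  unfold Vval
  have hterm : ∀ t : ℕ, γ ^ t * ∑ s, ∑ a, visit Ptr π ν t s * π s a * r s a
      = ∑ s0, ν s0 * (γ ^ t * ∑ s, ∑ a, visit Ptr π (dirac s0) t s * π s a * r s a) := by
    intro t
    calc γ ^ t * ∑ s, ∑ a, visit Ptr π ν t s * π s a * r s a
        = γ ^ t * ∑ s0, ∑ s, ∑ a, ν s0 *
            (visit Ptr π (dirac s0) t s * π s a * r s a) := by
          congr 1
          rw [← sum_rot3]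
          refine Finset.sum_congr rfl (fun s _ => Finset.sum_congr rfl (fun a _ => ?_))
          rw [visit_linear t s, Finset.sum_mul, Finset.sum_mul]
          exact Finset.sum_congr rfl (fun s0 _ => by ring)
      _ = ∑ s0, ν s0 * (γ ^ t * ∑ s, ∑ a, visit Ptr π (dirac s0) t s * π s a * r s a) := by
          rw [Finset.mul_sum]
          refine Finset.sum_congr rfl (fun s0 _ => ?_)
          rw [mul_sum2 (ν s0)]
          ring
  rw [tsum_congr hterm, Summable.tsum_finsetSum (fun s0 _ =>
    ((Vval_summable hγ0 hγ1 hPtr hr hπ (dirac_isDist s0)).mul_left (ν s0)))]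
  exact Finset.sum_congr rfl (fun s0 _ => tsum_mul_left)

lemma bellman (hγ0 : 0 ≤ γ) (hγ1 : γ < 1) (hPtr : IsKernel Ptr)
    (hr : ∀ s a, rmin ≤ r s a ∧ r s a ≤ rmax) (hπ : IsPol π) (s : S) :
    VS γ Ptr r π s = ∑ a, π s a * Qa γ Ptr r π s a := by
  have hsumm := Vval_summable hγ0 hγ1 hPtr hr hπ (dirac_isDist s)
  rw [VS_eq_Vval_dirac]
  unfold Vval
  rw [Summable.tsum_eq_zero_add hsumm]
  have hc0 : γ ^ 0 * ∑ s0, ∑ a, visit Ptr π (dirac s) 0 s0 * π s0 a * r s0 a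
      = ∑ a, π s a * r s a := by
    show γ ^ 0 * ∑ s0, ∑ a, dirac s s0 * π s0 a * r s0 a = _
    unfold dirac
    rw [pow_zero, one_mul, Finset.sum_comm]
    simp [ite_mul, mul_ite]
  have hshift : ∀ t : ℕ,
      γ ^ (t + 1) * ∑ s0, ∑ a0, visit Ptr π (dirac s) (t + 1) s0 * π s0 a0 * r s0 a0
      = ∑ a, ∑ s1, (π s a * Ptr s a s1 * γ) *
          (γ ^ t * ∑ s0, ∑ a0, visit Ptr π (dirac s1) t s0 * π s0 a0 * r s0 a0) := by
    intro t
    calc γ ^ (t + 1) * ∑ s0, ∑ a0, visit Ptr π (dirac s) (t + 1) s0 * π s0 a0 * r s0 a0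
        = γ ^ (t + 1) * ∑ s0, ∑ a0, ∑ a, ∑ s1, π s a * Ptr s a s1 *
            (visit Ptr π (dirac s1) t s0 * π s0 a0 * r s0 a0) := by
          congr 1
          refine Finset.sum_congr rfl (fun s0 _ => Finset.sum_congr rfl (fun a0 _ => ?_))
          rw [visit_front t s s0]
          simp only [Finset.sum_mul]
          exact Finset.sum_congr rfl (fun a _ => Finset.sum_congr rfl (fun s1 _ => by ring))
      _ = γ ^ (t + 1) * ∑ a, ∑ s1, ∑ s0, ∑ a0, π s a * Ptr s a s1 *
            (visit Ptr π (dirac s1) t s0 * π s0 a0 * r s0 a0) := by rw [sum_rot4]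
      _ = ∑ a, ∑ s1, (π s a * Ptr s a s1 * γ) *
            (γ ^ t * ∑ s0, ∑ a0, visit Ptr π (dirac s1) t s0 * π s0 a0 * r s0 a0) := by
          rw [Finset.mul_sum]
          refine Finset.sum_congr rfl (fun a _ => ?_)
          rw [Finset.mul_sum]
          refine Finset.sum_congr rfl (fun s1 _ => ?_)
          rw [mul_sum2 (π s a * Ptr s a s1)]
          rw [pow_succ]
          ring
  rw [tsum_congr hshift]
  rw [Summable.tsum_finsetSum (fun a _ => summable_sum (fun s1 _ =>
    ((Vval_summable hγ0 hγ1 hPtr hr hπ (dirac_isDist s1)).mul_left _)))]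
  have hswap : ∀ a, ∑' t : ℕ, ∑ s1, (π s a * Ptr s a s1 * γ) *
      (γ ^ t * ∑ s0, ∑ a0, visit Ptr π (dirac s1) t s0 * π s0 a0 * r s0 a0)
      = ∑ s1, (π s a * Ptr s a s1 * γ) * VS γ Ptr r π s1 := by
    intro a
    rw [Summable.tsum_finsetSum (fun s1 _ =>
      ((Vval_summable hγ0 hγ1 hPtr hr hπ (dirac_isDist s1)).mul_left _))]
    exact Finset.sum_congr rfl (fun s1 _ => tsum_mul_left)
  rw [Finset.sum_congr rfl (fun a _ => hswap a), hc0]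
  unfold Qa
  rw [← Finset.sum_add_distrib]
  refine Finset.sum_congr rfl (fun a _ => ?_)
  have h1 : ∑ s1, π s a * Ptr s a s1 * γ * VS γ Ptr r π s1
      = π s a * (γ * ∑ s1, Ptr s a s1 * VS γ Ptr r π s1) := by
    rw [Finset.mul_sum, Finset.mul_sum]
    exact Finset.sum_congr rfl (fun s1 _ => by ring)
  rw [h1]
  ring

lemma dvisit_front (hγ0 : 0 ≤ γ) (hγ1 : γ < 1) (hPtr : IsKernel Ptr) (hπ : IsPol π)
    (s s' : S) :
    dvisit γ Ptr π (dirac s) s' = (if s' = s then 1 else 0) +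
      γ * ∑ a, ∑ s1, π s a * Ptr s a s1 * dvisit γ Ptr π (dirac s1) s' := by
  have hsumm := dvisit_summable hγ0 hγ1 hPtr hπ (dirac_isDist s) s'
  unfold dvisit
  rw [Summable.tsum_eq_zero_add hsumm]
  have hc0 : γ ^ 0 * visit Ptr π (dirac s) 0 s' = (if s' = s then 1 else 0) := by
    show γ ^ 0 * dirac s s' = _
    unfold dirac
    simp
  have hshift : ∀ t : ℕ, γ ^ (t + 1) * visit Ptr π (dirac s) (t + 1) s'
      = ∑ a, ∑ s1, (γ * (π s a * Ptr s a s1)) *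
          (γ ^ t * visit Ptr π (dirac s1) t s') := by
    intro t
    rw [visit_front t s s', ← mul_sum2 (γ ^ (t+1))]
    refine Finset.sum_congr rfl (fun a _ => Finset.sum_congr rfl (fun s1 _ => ?_))
    rw [pow_succ]
    ring
  rw [tsum_congr hshift]
  rw [Summable.tsum_finsetSum (fun a _ => summable_sum (fun s1 _ =>
    ((dvisit_summable hγ0 hγ1 hPtr hπ (dirac_isDist s1) s').mul_left _)))]
  rw [hc0]
  congr 1
  rw [Finset.mul_sum]
  refine Finset.sum_congr rfl (fun a _ => ?_)
  rw [Summable.tsum_finsetSum (fun s1 _ =>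
    ((dvisit_summable hγ0 hγ1 hPtr hπ (dirac_isDist s1) s').mul_left _))]
  rw [Finset.mul_sum]
  refine Finset.sum_congr rfl (fun s1 _ => ?_)
  rw [tsum_mul_left]
  ring

lemma dvisit_linear (hγ0 : 0 ≤ γ) (hγ1 : γ < 1) (hPtr : IsKernel Ptr) (hπ : IsPol π)
    (hν : IsDist ν) (s' : S) :
    dvisit γ Ptr π ν s' = ∑ s0, ν s0 * dvisit γ Ptr π (dirac s0) s' := by
  unfold dvisit
  have hterm : ∀ t : ℕ, γ ^ t * visit Ptr π ν t s'
      = ∑ s0, ν s0 * (γ ^ t * visit Ptr π (dirac s0) t s') := by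
    intro t
    rw [visit_linear t s', Finset.mul_sum]
    exact Finset.sum_congr rfl (fun s0 _ => by ring)
  rw [tsum_congr hterm, Summable.tsum_finsetSum (fun s0 _ =>
    ((dvisit_summable hγ0 hγ1 hPtr hπ (dirac_isDist s0) s').mul_left (ν s0)))]
  exact Finset.sum_congr rfl (fun s0 _ => tsum_mul_left)

end MDP2

section Deriv

/-- The parameter line `θ0 + τ • basis`. -/
noncomputable def lineP (θ0 : Param S A P) (i : Fin N) (sb : S) (p : ParAct A P i)
    (ai : A i) (τ : ℝ) : Param S A P := θ0 + τ • basis P i sb p ai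

variable {θ0 : Param S A P} {i : Fin N} {sb : S} {p : ParAct A P i} {ai : A i}

lemma lineP_ne {j : Fin N} (hj : j ≠ i) (τ : ℝ) : lineP θ0 i sb p ai τ j = θ0 j := by
  unfold lineP basis
  have h0 : (Pi.single i (fun s' p' a' =>
      if s' = sb ∧ p' = p ∧ a' = ai then (1:ℝ) else 0)) j = 0 :=
    @Pi.single_eq_of_ne (Fin N) (fun j => S → ParAct A P j → A j → ℝ) _ _ i j hj _
  simp [h0]

lemma lineP_i (τ : ℝ) (s' : S) (p' : ParAct A P i) (b : A i) :
    lineP θ0 i sb p ai τ i s' p' b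
      = θ0 i s' p' b + τ * (if s' = sb ∧ p' = p ∧ b = ai then 1 else 0) := by
  unfold lineP basis
  simp [Pi.single_eq_same]

lemma locPol_lineP_ne {j : Fin N} (hj : j ≠ i) (τ : ℝ) (s' : S) (p' : ParAct A P j)
    (b : A j) : locPol P (lineP θ0 i sb p ai τ) j s' p' b = locPol P θ0 j s' p' b := by
  unfold locPol
  rw [lineP_ne hj]

lemma hasDerivAt_locPol (s' : S) (p' : ParAct A P i) (b : A i) :
    HasDerivAt (fun τ => locPol P (lineP θ0 i sb p ai τ) i s' p' b)
      (locPol P θ0 i s' p' b * ((if s' = sb ∧ p' = p ∧ b = ai then 1 else 0)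
        - ∑ c, (if s' = sb ∧ p' = p ∧ c = ai then (1:ℝ) else 0) * locPol P θ0 i s' p' c)) 0 := by
  classical
  set k : A i → ℝ := fun c => if s' = sb ∧ p' = p ∧ c = ai then 1 else 0 with hk
  have hfn : (fun τ => locPol P (lineP θ0 i sb p ai τ) i s' p' b)
      = fun τ => Real.exp (θ0 i s' p' b + τ * k b) /
          ∑ c, Real.exp (θ0 i s' p' c + τ * k c) := by
    funext τ
    unfold locPol
    rw [lineP_i]
    congr 1
    exact Finset.sum_congr rfl (fun c _ => by rw [lineP_i])
  rw [hfn]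
  have hE : ∀ c : A i, HasDerivAt (fun τ : ℝ => Real.exp (θ0 i s' p' c + τ * k c))
      (Real.exp (θ0 i s' p' c) * k c) 0 := by
    intro c
    have h1 : HasDerivAt (fun τ : ℝ => θ0 i s' p' c + τ * k c) (k c) 0 :=
      (hasDerivAt_mul_const (k c)).const_add _
    have := h1.exp
    simpa using this
  have hZ : HasDerivAt (fun τ : ℝ => ∑ c, Real.exp (θ0 i s' p' c + τ * k c))
      (∑ c, Real.exp (θ0 i s' p' c) * k c) 0 :=
    HasDerivAt.fun_sum (fun c _ => hE c)
  have hZ0 : (∑ c, Real.exp (θ0 i s' p' c + 0 * k c)) ≠ 0 := by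
    have : (0:ℝ) < ∑ c, Real.exp (θ0 i s' p' c + 0 * k c) :=
      Finset.sum_pos (fun c _ => Real.exp_pos _) Finset.univ_nonempty
    exact this.ne'
  have hdiv := (hE b).div hZ hZ0
  have hZsimp : (∑ c, Real.exp (θ0 i s' p' c + 0 * k c)) = ∑ c, Real.exp (θ0 i s' p' c) := by
    refine Finset.sum_congr rfl (fun c _ => by rw [zero_mul, add_zero])
  have hZpos : (0:ℝ) < ∑ c, Real.exp (θ0 i s' p' c) :=
    Finset.sum_pos (fun c _ => Real.exp_pos _) Finset.univ_nonempty
  have hEq : (Real.exp (θ0 i s' p' b) * k b * (∑ c, Real.exp (θ0 i s' p' c + 0 * k c)) -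
      Real.exp (θ0 i s' p' b + 0 * k b) * ∑ c, Real.exp (θ0 i s' p' c) * k c) /
      (∑ c, Real.exp (θ0 i s' p' c + 0 * k c)) ^ 2
      = locPol P θ0 i s' p' b * (k b - ∑ c, k c * locPol P θ0 i s' p' c) := by
    rw [hZsimp, zero_mul, add_zero]
    unfold locPol
    have hsum : ∑ c, k c * (Real.exp (θ0 i s' p' c) / ∑ c', Real.exp (θ0 i s' p' c'))
        = (∑ c, Real.exp (θ0 i s' p' c) * k c) / ∑ c', Real.exp (θ0 i s' p' c') := by
      rw [Finset.sum_div]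
      exact Finset.sum_congr rfl (fun c _ => by rw [mul_div_assoc]; ring)
    rw [hsum]
    field_simp
  have target : locPol P θ0 i s' p' b * (k b - ∑ c, k c * locPol P θ0 i s' p' c)
      = locPol P θ0 i s' p' b * ((if s' = sb ∧ p' = p ∧ b = ai then 1 else 0)
        - ∑ c, (if s' = sb ∧ p' = p ∧ c = ai then (1:ℝ) else 0) * locPol P θ0 i s' p' c) := by
    rw [hk]
  rw [← target, ← hEq]
  exact hdiv

/-- Closed-form derivative of the BN joint policy along the basis direction. -/
noncomputable def bD (θ0 : Param S A P) (i : Fin N) (sb : S) (p : ParAct A P i) (ai : A i) :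
    S → JointAct A → ℝ := fun s' a =>
  bnPol P θ0 s' a * ((if s' = sb ∧ restr A P i a = p ∧ a i = ai then 1 else 0)
    - (if s' = sb ∧ restr A P i a = p then 1 else 0) * locPol P θ0 i s' (restr A P i a) ai)

lemma hasDerivAt_bnPol (s' : S) (a : JointAct A) :
    HasDerivAt (fun τ => bnPol P (lineP θ0 i sb p ai τ) s' a) (bD θ0 i sb p ai s' a) 0 := by
  classical
  have hsplit : (fun τ => bnPol P (lineP θ0 i sb p ai τ) s' a)
      = fun τ => (∏ j ∈ Finset.univ.erase i, locPol P θ0 j s' (restr A P j a) (a j)) *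
          locPol P (lineP θ0 i sb p ai τ) i s' (restr A P i a) (a i) := by
    funext τ
    show ∏ j, locPol P (lineP θ0 i sb p ai τ) j s' (restr A P j a) (a j) = _
    rw [← Finset.mul_prod_erase Finset.univ _ (Finset.mem_univ i), mul_comm]
    congr 1
    exact Finset.prod_congr rfl (fun j hj =>
      locPol_lineP_ne (Finset.mem_erase.1 hj).1 τ s' _ _)
  rw [hsplit]
  have hder := HasDerivAt.const_mul
    (∏ j ∈ Finset.univ.erase i, locPol P θ0 j s' (restr A P j a) (a j))
    (hasDerivAt_locPol (θ0 := θ0) (sb := sb) (p := p) (ai := ai) s' (restr A P i a) (a i))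
  refine hder.congr_deriv ?_
  unfold bD
  have hb : bnPol P θ0 s' a = (∏ j ∈ Finset.univ.erase i,
      locPol P θ0 j s' (restr A P j a) (a j)) * locPol P θ0 i s' (restr A P i a) (a i) := by
    show ∏ j, locPol P θ0 j s' (restr A P j a) (a j) = _
    rw [← Finset.mul_prod_erase Finset.univ _ (Finset.mem_univ i), mul_comm]
  rw [hb]
  have hsum : ∑ c, (if s' = sb ∧ restr A P i a = p ∧ c = ai then (1:ℝ) else 0) *
        locPol P θ0 i s' (restr A P i a) c
      = (if s' = sb ∧ restr A P i a = p then 1 else 0) *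
          locPol P θ0 i s' (restr A P i a) ai := by
    by_cases hcond : s' = sb ∧ restr A P i a = p
    · obtain ⟨h1, h2⟩ := hcond
      simp only [h1, h2, true_and, if_true, one_mul, ite_mul, zero_mul]
      rw [Finset.sum_ite_eq' Finset.univ ai (fun c => locPol P θ0 i sb p c)]
      simp
    · have h1 : ∀ c : A i, ¬(s' = sb ∧ restr A P i a = p ∧ c = ai) :=
        fun c hcon => hcond ⟨hcon.1, hcon.2.1⟩
      rw [if_neg hcond, zero_mul]
      rw [Finset.sum_congr rfl (fun c _ => by rw [if_neg (h1 c), zero_mul])]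
      simp
  rw [hsum]
  ring

/-- Determinant of a matrix with differentiable entries is differentiable. -/
lemma differentiableAt_det {n : Type} [Fintype n] [DecidableEq n] {f : ℝ → Matrix n n ℝ}
    {τ0 : ℝ} (h : ∀ k l, DifferentiableAt ℝ (fun τ => f τ k l) τ0) :
    DifferentiableAt ℝ (fun τ => (f τ).det) τ0 := by
  have heq : (fun τ => (f τ).det)
      = fun τ => ∑ σ : Equiv.Perm n, ((Equiv.Perm.sign σ : ℤ) : ℝ) * ∏ k, f τ (σ k) k := by
    funext τ
    rw [Matrix.det_apply']
  rw [heq]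
  refine DifferentiableAt.fun_sum (fun σ _ => DifferentiableAt.const_mul ?_ _)
  exact (HasDerivAt.fun_finsetProd (fun k _ => (h (σ k) k).hasDerivAt)).differentiableAt

end Deriv

section Mat

open scoped Matrix

variable {γ : ℝ} {Ptr : S → JointAct A → S → ℝ} {r : S → JointAct A → ℝ} {π : Pol S A}
variable {rmin rmax : ℝ}

/-- The Bellman matrix `I - γ P_π`. -/
noncomputable def Mmat (γ : ℝ) (Ptr : S → JointAct A → S → ℝ) (π : Pol S A) :
    Matrix S S ℝ :=
  Matrix.of fun s s' => (if s = s' then (1:ℝ) else 0) - γ * ∑ a, π s a * Ptr s a s'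

lemma Mmat_mulVec (v : S → ℝ) (s : S) :
    (Mmat γ Ptr π *ᵥ v) s = v s - ∑ s', (γ * ∑ a, π s a * Ptr s a s') * v s' := by
  show ∑ s', ((if s = s' then (1:ℝ) else 0) - γ * ∑ a, π s a * Ptr s a s') * v s' = _
  rw [Finset.sum_congr rfl (fun s' _ => sub_mul _ _ _), Finset.sum_sub_distrib]
  congr 1
  simp [ite_mul]

lemma Mmat_mulVec_VS (hγ0 : 0 ≤ γ) (hγ1 : γ < 1) (hPtr : IsKernel Ptr)
    (hr : ∀ s a, rmin ≤ r s a ∧ r s a ≤ rmax) (hπ : IsPol π) :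
    Mmat γ Ptr π *ᵥ (fun s => VS γ Ptr r π s) = fun s => ∑ a, π s a * r s a := by
  funext s
  rw [Mmat_mulVec]
  have hB := bellman hγ0 hγ1 hPtr hr hπ s
  unfold Qa at hB
  rw [hB]
  have h1 : ∑ a, π s a * (r s a + γ * ∑ s', Ptr s a s' * VS γ Ptr r π s')
      = (∑ a, π s a * r s a) +
        ∑ a, π s a * (γ * ∑ s', Ptr s a s' * VS γ Ptr r π s') := by
    rw [← Finset.sum_add_distrib]
    exact Finset.sum_congr rfl (fun a _ => by ring)
  rw [h1]
  have h2 : ∑ a, π s a * (γ * ∑ s', Ptr s a s' * VS γ Ptr r π s')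
      = ∑ s', (γ * ∑ a, π s a * Ptr s a s') * VS γ Ptr r π s' := by
    calc ∑ a, π s a * (γ * ∑ s', Ptr s a s' * VS γ Ptr r π s')
        = ∑ a, ∑ s', γ * (π s a * Ptr s a s' * VS γ Ptr r π s') := by
          refine Finset.sum_congr rfl (fun a _ => ?_)
          rw [Finset.mul_sum, Finset.mul_sum]
          exact Finset.sum_congr rfl (fun s' _ => by ring)
      _ = ∑ s', ∑ a, γ * (π s a * Ptr s a s' * VS γ Ptr r π s') := Finset.sum_comm
      _ = ∑ s', (γ * ∑ a, π s a * Ptr s a s') * VS γ Ptr r π s' := by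
          refine Finset.sum_congr rfl (fun s' _ => ?_)
          rw [Finset.mul_sum, Finset.sum_mul]
          exact Finset.sum_congr rfl (fun a _ => by ring)
  rw [h2]
  ring

lemma Mmat_inj (hγ0 : 0 ≤ γ) (hγ1 : γ < 1) (hPtr : IsKernel Ptr) (hπ : IsPol π)
    {v : S → ℝ} (hv : Mmat γ Ptr π *ᵥ v = 0) : v = 0 := by
  obtain ⟨s0, _, hmax⟩ := Finset.exists_max_image Finset.univ (fun s => |v s|)
    Finset.univ_nonempty
  have hrow : ∀ s : S, ∑ s', (γ * ∑ a, π s a * Ptr s a s') = γ := by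
    intro s
    rw [← Finset.mul_sum]
    rw [Finset.sum_comm]
    have : ∑ a, ∑ s', π s a * Ptr s a s' = 1 := by
      rw [Finset.sum_congr rfl (fun a _ => by
        rw [← Finset.mul_sum, hPtr.2 s a, mul_one])]
      exact hπ.2 s
    rw [this, mul_one]
  have h0 : v s0 = ∑ s', (γ * ∑ a, π s0 a * Ptr s0 a s') * v s' := by
    have := congrFun hv s0
    rw [Mmat_mulVec] at this
    have h' : v s0 - ∑ s', (γ * ∑ a, π s0 a * Ptr s0 a s') * v s' = 0 := this
    linarith
  have hwnn : ∀ s', 0 ≤ γ * ∑ a, π s0 a * Ptr s0 a s' := by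
    intro s'
    exact mul_nonneg hγ0 (Finset.sum_nonneg (fun a _ =>
      mul_nonneg (hπ.1 s0 a) (hPtr.1 s0 a s')))
  have habs : |v s0| ≤ γ * |v s0| := by
    calc |v s0| = |∑ s', (γ * ∑ a, π s0 a * Ptr s0 a s') * v s'| := by rw [← h0]
      _ ≤ ∑ s', |(γ * ∑ a, π s0 a * Ptr s0 a s') * v s'| := Finset.abs_sum_le_sum_abs _ _
      _ = ∑ s', (γ * ∑ a, π s0 a * Ptr s0 a s') * |v s'| := by
          refine Finset.sum_congr rfl (fun s' _ => ?_)
          rw [abs_mul, abs_of_nonneg (hwnn s')]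
      _ ≤ ∑ s', (γ * ∑ a, π s0 a * Ptr s0 a s') * |v s0| := by
          refine Finset.sum_le_sum (fun s' _ => ?_)
          exact mul_le_mul_of_nonneg_left (hmax s' (Finset.mem_univ s')) (hwnn s')
      _ = γ * |v s0| := by rw [← Finset.sum_mul, hrow s0]
  have hz : |v s0| = 0 := by
    nlinarith [abs_nonneg (v s0)]
  funext s
  have h1 : |v s| ≤ 0 := hz ▸ hmax s (Finset.mem_univ s)
  simpa using abs_eq_zero.1 (le_antisymm h1 (abs_nonneg _))

lemma Mmat_det_ne_zero (hγ0 : 0 ≤ γ) (hγ1 : γ < 1) (hPtr : IsKernel Ptr) (hπ : IsPol π) :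
    (Mmat γ Ptr π).det ≠ 0 := by
  intro hdet
  obtain ⟨v, hv0, hveq⟩ := (Matrix.exists_mulVec_eq_zero_iff).2 hdet
  exact hv0 (Mmat_inj hγ0 hγ1 hPtr hπ hveq)

lemma VS_cramer (hγ0 : 0 ≤ γ) (hγ1 : γ < 1) (hPtr : IsKernel Ptr)
    (hr : ∀ s a, rmin ≤ r s a ∧ r s a ≤ rmax) (hπ : IsPol π) (s : S) :
    VS γ Ptr r π s = ((Mmat γ Ptr π).det)⁻¹ *
      ((Mmat γ Ptr π).updateCol s (fun s' => ∑ a, π s' a * r s' a)).det := by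
  have hMV := Mmat_mulVec_VS hγ0 hγ1 hPtr hr hπ
  have hinj : ∀ x y : S → ℝ, Mmat γ Ptr π *ᵥ x = Mmat γ Ptr π *ᵥ y → x = y := by
    intro x y hxy
    have : Mmat γ Ptr π *ᵥ (x - y) = 0 := by
      rw [Matrix.mulVec_sub, hxy, sub_self]
    have := Mmat_inj hγ0 hγ1 hPtr hπ this
    exact sub_eq_zero.1 this
  have hcr : (Mmat γ Ptr π).det • (fun s => VS γ Ptr r π s)
      = Matrix.cramer (Mmat γ Ptr π) (fun s' => ∑ a, π s' a * r s' a) := by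
    apply hinj
    rw [Matrix.mulVec_smul, hMV, Matrix.mulVec_cramer]
  have hval := congrFun hcr s
  rw [Pi.smul_apply, smul_eq_mul, Matrix.cramer_apply] at hval
  rw [← hval, inv_mul_cancel_left₀ (Mmat_det_ne_zero hγ0 hγ1 hPtr hπ)]

end Mat

section Grad

open scoped Matrix

variable {γ : ℝ} {Ptr : S → JointAct A → S → ℝ} {r : S → JointAct A → ℝ}
variable {rmin rmax : ℝ} {μ : S → ℝ}

lemma gradV_formula (hDAG : IsDAG P) (hγ0 : 0 ≤ γ) (hγ1 : γ < 1) (hPtr : IsKernel Ptr)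
    (hr : ∀ s a, rmin ≤ r s a ∧ r s a ≤ rmax) (hμ : IsDist μ)
    (θ0 : Param S A P) (i : Fin N) (sb : S) (p : ParAct A P i) (ai : A i) :
    gradV γ Ptr r μ P θ0 i sb p ai
      = dvisit γ Ptr (bnPol P θ0) μ sb *
        ((∑ a, if restr A P i a = p ∧ a i = ai
            then bnPol P θ0 sb a * Qa γ Ptr r (bnPol P θ0) sb a else 0)
          - locPol P θ0 i sb p ai *
            (∑ a, if restr A P i a = p
              then bnPol P θ0 sb a * Qa γ Ptr r (bnPol P θ0) sb a else 0)) := by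
  classical
  have hπτ : ∀ τ : ℝ, IsPol (bnPol P (lineP θ0 i sb p ai τ)) :=
    fun τ => bnPol_isPol hDAG _
  have hπ0 : IsPol (bnPol P θ0) := bnPol_isPol hDAG θ0
  have hline0 : lineP θ0 i sb p ai 0 = θ0 := by
    unfold lineP
    simp
  have hMden : ∀ k l : S, DifferentiableAt ℝ
      (fun τ => Mmat γ Ptr (bnPol P (lineP θ0 i sb p ai τ)) k l) 0 := by
    intro k l
    show DifferentiableAt ℝ (fun τ => (if k = l then (1:ℝ) else 0) -
      γ * ∑ a, bnPol P (lineP θ0 i sb p ai τ) k a * Ptr k a l) 0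
    refine (differentiableAt_const _).sub (DifferentiableAt.const_mul ?_ γ)
    exact DifferentiableAt.fun_sum (fun a _ =>
      ((hasDerivAt_bnPol k a).differentiableAt).mul_const _)
  have hrvecd : ∀ k : S, DifferentiableAt ℝ
      (fun τ => ∑ a, bnPol P (lineP θ0 i sb p ai τ) k a * r k a) 0 :=
    fun k => DifferentiableAt.fun_sum (fun a _ =>
      ((hasDerivAt_bnPol k a).differentiableAt).mul_const _)
  have hdet_ne : (Mmat γ Ptr (bnPol P θ0)).det ≠ 0 :=
    Mmat_det_ne_zero hγ0 hγ1 hPtr hπ0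
  have hVSdiff : ∀ s : S, DifferentiableAt ℝ
      (fun τ => VS γ Ptr r (bnPol P (lineP θ0 i sb p ai τ)) s) 0 := by
    intro s
    have heq : (fun τ => VS γ Ptr r (bnPol P (lineP θ0 i sb p ai τ)) s)
        = fun τ => ((Mmat γ Ptr (bnPol P (lineP θ0 i sb p ai τ))).det)⁻¹ *
            ((Mmat γ Ptr (bnPol P (lineP θ0 i sb p ai τ))).updateCol s
              (fun s' => ∑ a, bnPol P (lineP θ0 i sb p ai τ) s' a * r s' a)).det :=
      funext fun τ => VS_cramer hγ0 hγ1 hPtr hr (hπτ τ) s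
    rw [heq]
    have hd1 : DifferentiableAt ℝ
        (fun τ => (Mmat γ Ptr (bnPol P (lineP θ0 i sb p ai τ))).det) 0 :=
      differentiableAt_det hMden
    have hdnz : (Mmat γ Ptr (bnPol P (lineP θ0 i sb p ai 0))).det ≠ 0 := by
      rw [hline0]; exact hdet_ne
    refine DifferentiableAt.mul (hd1.inv hdnz) (differentiableAt_det ?_)
    intro k l
    have hupd : (fun τ => ((Mmat γ Ptr (bnPol P (lineP θ0 i sb p ai τ))).updateCol s
          (fun s' => ∑ a, bnPol P (lineP θ0 i sb p ai τ) s' a * r s' a)) k l)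
        = fun τ => if l = s then ∑ a, bnPol P (lineP θ0 i sb p ai τ) k a * r k a
            else Mmat γ Ptr (bnPol P (lineP θ0 i sb p ai τ)) k l := by
      funext τ
      rw [Matrix.updateCol_apply]
    rw [hupd]
    by_cases hls : l = s
    · simp only [hls, if_true]
      exact hrvecd k
    · simp only [hls, if_false]
      exact hMden k l
  set W : S → ℝ :=
    fun s => deriv (fun τ => VS γ Ptr r (bnPol P (lineP θ0 i sb p ai τ)) s) 0 with hWdef
  have hW : ∀ s, HasDerivAt (fun τ => VS γ Ptr r (bnPol P (lineP θ0 i sb p ai τ)) s)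
      (W s) 0 := fun s => (hVSdiff s).hasDerivAt
  set u : S → ℝ :=
    fun s' => ∑ a, bD θ0 i sb p ai s' a * Qa γ Ptr r (bnPol P θ0) s' a with hudef
  have hWeq : ∀ s, W s = u s + γ * ∑ a, bnPol P θ0 s a *
      ∑ s', Ptr s a s' * W s' := by
    intro s
    have hfun : (fun τ => VS γ Ptr r (bnPol P (lineP θ0 i sb p ai τ)) s)
        = fun τ => ∑ a, bnPol P (lineP θ0 i sb p ai τ) s a *
            (r s a + γ * ∑ s', Ptr s a s' *
              VS γ Ptr r (bnPol P (lineP θ0 i sb p ai τ)) s') := by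
      funext τ
      exact bellman hγ0 hγ1 hPtr hr (hπτ τ) s
    have hRHS : HasDerivAt (fun τ => ∑ a, bnPol P (lineP θ0 i sb p ai τ) s a *
        (r s a + γ * ∑ s', Ptr s a s' * VS γ Ptr r (bnPol P (lineP θ0 i sb p ai τ)) s'))
        (∑ a, (bD θ0 i sb p ai s a *
            (r s a + γ * ∑ s', Ptr s a s' * VS γ Ptr r (bnPol P θ0) s')
          + bnPol P θ0 s a * (γ * ∑ s', Ptr s a s' * W s'))) 0 := by
      refine HasDerivAt.fun_sum (fun a _ => ?_)
      have h1 := hasDerivAt_bnPol (θ0 := θ0) (i := i) (sb := sb) (p := p) (ai := ai) s a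
      have h2 : HasDerivAt (fun τ => r s a + γ * ∑ s', Ptr s a s' *
          VS γ Ptr r (bnPol P (lineP θ0 i sb p ai τ)) s')
          (γ * ∑ s', Ptr s a s' * W s') 0 := by
        refine HasDerivAt.const_add _ ?_
        refine HasDerivAt.const_mul γ ?_
        exact HasDerivAt.fun_sum (fun s' _ => HasDerivAt.const_mul (Ptr s a s') (hW s'))
      have hd := h1.mul h2
      rw [hline0] at hd
      exact hd
    have hLHS' : HasDerivAt (fun τ => VS γ Ptr r (bnPol P (lineP θ0 i sb p ai τ)) s)
        (∑ a, (bD θ0 i sb p ai s a *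
            (r s a + γ * ∑ s', Ptr s a s' * VS γ Ptr r (bnPol P θ0) s')
          + bnPol P θ0 s a * (γ * ∑ s', Ptr s a s' * W s'))) 0 := by
      rw [hfun]
      exact hRHS
    have huniq := (hW s).unique hLHS'
    rw [huniq, Finset.sum_add_distrib]
    congr 1
    rw [Finset.mul_sum]
    exact Finset.sum_congr rfl (fun a _ => by ring)
  set Wst : S → ℝ :=
    fun s => ∑ s', dvisit γ Ptr (bnPol P θ0) (dirac s) s' * u s' with hWstdef
  have hWsteq : ∀ s, Wst s = u s + γ * ∑ a, bnPol P θ0 s a *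
      ∑ s', Ptr s a s' * Wst s' := by
    intro s
    calc Wst s = ∑ s', ((if s' = s then (1:ℝ) else 0) +
        γ * ∑ a, ∑ s1, bnPol P θ0 s a * Ptr s a s1 *
          dvisit γ Ptr (bnPol P θ0) (dirac s1) s') * u s' := by
          refine Finset.sum_congr rfl (fun s' _ => ?_)
          rw [dvisit_front hγ0 hγ1 hPtr hπ0 s s']
      _ = (∑ s', (if s' = s then (1:ℝ) else 0) * u s') +
          ∑ s', (γ * ∑ a, ∑ s1, bnPol P θ0 s a * Ptr s a s1 *
            dvisit γ Ptr (bnPol P θ0) (dirac s1) s') * u s' := by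
          rw [← Finset.sum_add_distrib]
          exact Finset.sum_congr rfl (fun s' _ => by ring)
      _ = u s + γ * ∑ a, bnPol P θ0 s a * ∑ s', Ptr s a s' * Wst s' := by
          congr 1
          · simp [ite_mul]
          · calc ∑ s', (γ * ∑ a, ∑ s1, bnPol P θ0 s a * Ptr s a s1 *
                dvisit γ Ptr (bnPol P θ0) (dirac s1) s') * u s'
                = ∑ s', ∑ a, ∑ s1, γ * (bnPol P θ0 s a * Ptr s a s1 *
                    (dvisit γ Ptr (bnPol P θ0) (dirac s1) s' * u s')) := by
                  refine Finset.sum_congr rfl (fun s' _ => ?_)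
                  simp only [Finset.mul_sum, Finset.sum_mul]
                  exact Finset.sum_congr rfl (fun a _ =>
                    Finset.sum_congr rfl (fun s1 _ => by ring))
              _ = ∑ a, ∑ s1, ∑ s', γ * (bnPol P θ0 s a * Ptr s a s1 *
                    (dvisit γ Ptr (bnPol P θ0) (dirac s1) s' * u s')) := sum_rot3' _
              _ = γ * ∑ a, bnPol P θ0 s a * ∑ s1, Ptr s a s1 * Wst s1 := by
                  rw [Finset.mul_sum]
                  refine Finset.sum_congr rfl (fun a _ => ?_)
                  rw [Finset.mul_sum, Finset.mul_sum]
                  refine Finset.sum_congr rfl (fun s1 _ => ?_)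
                  have hws : Wst s1
                      = ∑ s', dvisit γ Ptr (bnPol P θ0) (dirac s1) s' * u s' := rfl
                  rw [hws]
                  simp only [Finset.mul_sum]
                  exact Finset.sum_congr rfl (fun s' _ => by ring)
  have key : ∀ (s : S) (v : S → ℝ),
      ∑ s', (γ * ∑ a, bnPol P θ0 s a * Ptr s a s') * v s'
      = γ * ∑ a, bnPol P θ0 s a * ∑ s', Ptr s a s' * v s' := by
    intro s v
    calc ∑ s', (γ * ∑ a, bnPol P θ0 s a * Ptr s a s') * v s'
        = ∑ s', ∑ a, γ * (bnPol P θ0 s a * (Ptr s a s' * v s')) := by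
          simp only [Finset.mul_sum, Finset.sum_mul]
          all_goals exact Finset.sum_congr rfl (fun s' _ =>
            Finset.sum_congr rfl (fun a _ => by ring))
      _ = ∑ a, ∑ s', γ * (bnPol P θ0 s a * (Ptr s a s' * v s')) := Finset.sum_comm
      _ = γ * ∑ a, bnPol P θ0 s a * ∑ s', Ptr s a s' * v s' := by
          simp only [Finset.mul_sum]
          all_goals exact Finset.sum_congr rfl (fun a _ =>
            Finset.sum_congr rfl (fun s' _ => by ring))
  have hWWst : W = Wst := by
    have hzero : Mmat γ Ptr (bnPol P θ0) *ᵥ (fun s => W s - Wst s) = 0 := by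
      funext s
      simp only [Pi.zero_apply]
      rw [Mmat_mulVec]
      rw [key s (fun s' => W s' - Wst s')]
      have e4 : γ * ∑ a, bnPol P θ0 s a * ∑ s', Ptr s a s' * (W s' - Wst s')
          = (γ * ∑ a, bnPol P θ0 s a * ∑ s', Ptr s a s' * W s') -
            (γ * ∑ a, bnPol P θ0 s a * ∑ s', Ptr s a s' * Wst s') := by
        rw [← mul_sub, ← Finset.sum_sub_distrib]
        congr 1
        refine Finset.sum_congr rfl (fun a _ => ?_)
        rw [← mul_sub, ← Finset.sum_sub_distrib]
        congr 1
        exact Finset.sum_congr rfl (fun s' _ => mul_sub _ _ _)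
      rw [e4]
      have e1 := hWeq s
      have e2 := hWsteq s
      linarith
    have := Mmat_inj hγ0 hγ1 hPtr hπ0 hzero
    funext s
    have h5 := congrFun this s
    simp only [Pi.zero_apply] at h5
    linarith
  show pderiv P (fun θ' => Vval γ Ptr r (bnPol P θ') μ) θ0 i sb p ai = _
  unfold pderiv
  have hVfun : (fun τ : ℝ => Vval γ Ptr r (bnPol P (θ0 + τ • basis P i sb p ai)) μ)
      = fun τ => ∑ s, μ s * VS γ Ptr r (bnPol P (lineP θ0 i sb p ai τ)) s :=
    funext fun τ => Vval_linear hγ0 hγ1 hPtr hr (hπτ τ) hμ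
  rw [hVfun]
  have hder : HasDerivAt
      (fun τ => ∑ s, μ s * VS γ Ptr r (bnPol P (lineP θ0 i sb p ai τ)) s)
      (∑ s, μ s * W s) 0 :=
    HasDerivAt.fun_sum (fun s _ => HasDerivAt.const_mul (μ s) (hW s))
  rw [hder.deriv]
  have hu0 : ∀ s', s' ≠ sb → u s' = 0 := by
    intro s' hne
    show (∑ a, bD θ0 i sb p ai s' a * Qa γ Ptr r (bnPol P θ0) s' a) = 0
    refine Finset.sum_eq_zero (fun a _ => ?_)
    unfold bD
    have h1 : ¬(s' = sb ∧ restr A P i a = p ∧ a i = ai) := fun h => hne h.1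
    have h2 : ¬(s' = sb ∧ restr A P i a = p) := fun h => hne h.1
    rw [if_neg h1, if_neg h2]
    ring
  have husb : u sb = (∑ a, if restr A P i a = p ∧ a i = ai
        then bnPol P θ0 sb a * Qa γ Ptr r (bnPol P θ0) sb a else 0)
      - locPol P θ0 i sb p ai * (∑ a, if restr A P i a = p
        then bnPol P θ0 sb a * Qa γ Ptr r (bnPol P θ0) sb a else 0) := by
    have hsplit : ∀ a : JointAct A, bD θ0 i sb p ai sb a * Qa γ Ptr r (bnPol P θ0) sb a
        = (if restr A P i a = p ∧ a i = ai
            then bnPol P θ0 sb a * Qa γ Ptr r (bnPol P θ0) sb a else 0)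
          - locPol P θ0 i sb p ai * (if restr A P i a = p
            then bnPol P θ0 sb a * Qa γ Ptr r (bnPol P θ0) sb a else 0) := by
      intro a
      unfold bD
      by_cases h1 : restr A P i a = p
      · by_cases h2 : a i = ai
        · rw [if_pos ⟨rfl, h1, h2⟩, if_pos ⟨rfl, h1⟩, if_pos ⟨h1, h2⟩, if_pos h1, h1]
          ring
        · rw [if_neg (fun h => h2 h.2.2), if_pos ⟨rfl, h1⟩,
            if_neg (fun h => h2 h.2), if_pos h1, h1]
          ring
      · rw [if_neg (fun h => h1 h.2.1), if_neg (fun h => h1 h.2),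
          if_neg (fun h => h1 h.1), if_neg h1]
        ring
    show (∑ a, bD θ0 i sb p ai sb a * Qa γ Ptr r (bnPol P θ0) sb a) = _
    rw [Finset.sum_congr rfl (fun a _ => hsplit a), Finset.sum_sub_distrib,
      Finset.mul_sum]
  calc ∑ s, μ s * W s
      = ∑ s, μ s * ∑ s', dvisit γ Ptr (bnPol P θ0) (dirac s) s' * u s' := by
        refine Finset.sum_congr rfl (fun s _ => ?_)
        rw [congrFun hWWst s]
    _ = ∑ s', ∑ s, μ s * (dvisit γ Ptr (bnPol P θ0) (dirac s) s' * u s') := by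
        rw [← Finset.sum_comm]
        exact Finset.sum_congr rfl (fun s _ => Finset.mul_sum _ _ _)
    _ = ∑ s', (∑ s, μ s * dvisit γ Ptr (bnPol P θ0) (dirac s) s') * u s' := by
        refine Finset.sum_congr rfl (fun s' _ => ?_)
        rw [Finset.sum_mul]
        exact Finset.sum_congr rfl (fun s _ => by ring)
    _ = ∑ s', dvisit γ Ptr (bnPol P θ0) μ s' * u s' := by
        refine Finset.sum_congr rfl (fun s' _ => ?_)
        rw [dvisit_linear hγ0 hγ1 hPtr hπ0 hμ s']
    _ = dvisit γ Ptr (bnPol P θ0) μ sb * u sb := by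
        refine Finset.sum_eq_single sb (fun s' _ h => by rw [hu0 s' h, mul_zero])
          (fun h => absurd (Finset.mem_univ sb) h)
    _ = _ := by rw [husb]

end Grad

section Final

variable {γ : ℝ} {Ptr : S → JointAct A → S → ℝ} {r : S → JointAct A → ℝ}
variable {rmin rmax : ℝ} {μ : S → ℝ}

lemma exists_joint (hDAG : IsDAG P) (i : Fin N) (p : ParAct A P i) (x : A i) :
    ∃ a : JointAct A, restr A P i a = p ∧ a i = x := by
  classical
  obtain ⟨ord, hord⟩ := hDAG
  have hii : i ∉ P i := fun h => lt_irrefl _ (hord i i h)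
  set base : JointAct A := fun j => if h : j ∈ P i then p ⟨j, h⟩ else Classical.arbitrary _
    with hbase
  refine ⟨Function.update base i x, ?_, Function.update_self i x base⟩
  rw [restr_update i i hii]
  funext k
  show (if h : (k : Fin N) ∈ P i then p ⟨k, h⟩ else Classical.arbitrary _) = p k
  rw [dif_pos k.2]

lemma denPlus_pos (hDAG : IsDAG P) (θ0 : Param S A P) (i : Fin N) (s : S)
    (p : ParAct A P i) (x : A i) :
    0 < ∑ a, if restr A P i a = p ∧ a i = x then bnPol P θ0 s a else 0 := by
  obtain ⟨aw, hw1, hw2⟩ := exists_joint hDAG i p x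
  refine Finset.sum_pos' (fun a _ => ?_) ⟨aw, Finset.mem_univ aw, ?_⟩
  · split
    · exact bnPol_nonneg θ0 s a
    · exact le_refl 0
  · rw [if_pos ⟨hw1, hw2⟩]
    exact bnPol_pos θ0 s aw

lemma parentMarg_pos (hDAG : IsDAG P) (θ0 : Param S A P) (i : Fin N) (s : S)
    (p : ParAct A P i) :
    0 < parentMarg P (bnPol P θ0) i s p := by
  obtain ⟨aw, hw1, _⟩ := exists_joint hDAG i p (Classical.arbitrary _)
  refine Finset.sum_pos' (fun a _ => ?_) ⟨aw, Finset.mem_univ aw, ?_⟩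
  · split
    · exact bnPol_nonneg θ0 s a
    · exact le_refl 0
  · rw [if_pos hw1]
    exact bnPol_pos θ0 s aw

lemma parentMarg_le_one (hDAG : IsDAG P) (θ0 : Param S A P) (i : Fin N) (s : S)
    (p : ParAct A P i) : parentMarg P (bnPol P θ0) i s p ≤ 1 := by
  rw [← bnPol_sum_one hDAG θ0 s]
  refine Finset.sum_le_sum (fun a _ => ?_)
  split
  · exact le_refl _
  · exact bnPol_nonneg θ0 s a

/-- Generic bound for a conditional expectation of `Qa`-values. -/
lemma ratio_bounds {w q : JointAct A → ℝ} (hw : ∀ a, 0 ≤ w a) {lo hi : ℝ}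
    (hq : ∀ a, lo ≤ q a ∧ q a ≤ hi) (hpos : 0 < ∑ a, w a) :
    lo ≤ (∑ a, w a * q a) / (∑ a, w a) ∧ (∑ a, w a * q a) / (∑ a, w a) ≤ hi := by
  have hlo : ∑ a : JointAct A, w a * lo ≤ ∑ a : JointAct A, w a * q a :=
    Finset.sum_le_sum (fun a _ => mul_le_mul_of_nonneg_left (hq a).1 (hw a))
  have hhi : ∑ a : JointAct A, w a * q a ≤ ∑ a : JointAct A, w a * hi :=
    Finset.sum_le_sum (fun a _ => mul_le_mul_of_nonneg_left (hq a).2 (hw a))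
  have hloeq : ∑ a : JointAct A, w a * lo = lo * ∑ a : JointAct A, w a := by
    rw [Finset.mul_sum]
    exact Finset.sum_congr rfl (fun a _ => by ring)
  have hhieq : ∑ a : JointAct A, w a * hi = hi * ∑ a : JointAct A, w a := by
    rw [Finset.mul_sum]
    exact Finset.sum_congr rfl (fun a _ => by ring)
  constructor
  · rw [le_div_iff₀ hpos]
    rw [hloeq] at hlo
    exact hlo
  · rw [div_le_iff₀ hpos]
    rw [hhieq] at hhi
    exact hhi

lemma QparPlus_bounds (hDAG : IsDAG P) (hγ0 : 0 ≤ γ) (hγ1 : γ < 1) (hPtr : IsKernel Ptr)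
    (hr : ∀ s a, rmin ≤ r s a ∧ r s a ≤ rmax) (θ0 : Param S A P) (i : Fin N) (s : S)
    (p : ParAct A P i) (x : A i) :
    rmin * (1 - γ)⁻¹ ≤ QparPlus γ Ptr r P (bnPol P θ0) i s p x ∧
      QparPlus γ Ptr r P (bnPol P θ0) i s p x ≤ rmax * (1 - γ)⁻¹ := by
  have hπ0 : IsPol (bnPol P θ0) := bnPol_isPol hDAG θ0
  have h := ratio_bounds (w := fun a => if restr A P i a = p ∧ a i = x
      then bnPol P θ0 s a else 0) (q := fun a => Qa γ Ptr r (bnPol P θ0) s a)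
    (fun a => by split; exacts [bnPol_nonneg θ0 s a, le_refl 0])
    (fun a => Qa_bounds hγ0 hγ1 hPtr hr hπ0 s a)
    (denPlus_pos hDAG θ0 i s p x)
  have heq : ∑ a, (if restr A P i a = p ∧ a i = x then bnPol P θ0 s a else 0) *
      Qa γ Ptr r (bnPol P θ0) s a
      = ∑ a, if restr A P i a = p ∧ a i = x
          then bnPol P θ0 s a * Qa γ Ptr r (bnPol P θ0) s a else 0 := by
    refine Finset.sum_congr rfl (fun a _ => ?_)
    split <;> simp
  rw [heq] at h
  exact h

lemma Qpar_bounds (hDAG : IsDAG P) (hγ0 : 0 ≤ γ) (hγ1 : γ < 1) (hPtr : IsKernel Ptr)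
    (hr : ∀ s a, rmin ≤ r s a ∧ r s a ≤ rmax) (θ0 : Param S A P) (i : Fin N) (s : S)
    (p : ParAct A P i) :
    rmin * (1 - γ)⁻¹ ≤ Qpar γ Ptr r P (bnPol P θ0) i s p ∧
      Qpar γ Ptr r P (bnPol P θ0) i s p ≤ rmax * (1 - γ)⁻¹ := by
  have hπ0 : IsPol (bnPol P θ0) := bnPol_isPol hDAG θ0
  have h := ratio_bounds (w := fun a => if restr A P i a = p then bnPol P θ0 s a else 0)
    (q := fun a => Qa γ Ptr r (bnPol P θ0) s a)
    (fun a => by split; exacts [bnPol_nonneg θ0 s a, le_refl 0])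
    (fun a => Qa_bounds hγ0 hγ1 hPtr hr hπ0 s a)
    (parentMarg_pos hDAG θ0 i s p)
  have heq : ∑ a, (if restr A P i a = p then bnPol P θ0 s a else 0) *
      Qa γ Ptr r (bnPol P θ0) s a
      = ∑ a, if restr A P i a = p
          then bnPol P θ0 s a * Qa γ Ptr r (bnPol P θ0) s a else 0 := by
    refine Finset.sum_congr rfl (fun a _ => ?_)
    split <;> simp
  rw [heq] at h
  exact h

lemma Adv_abs_le (hDAG : IsDAG P) (hγ0 : 0 ≤ γ) (hγ1 : γ < 1) (hPtr : IsKernel Ptr)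
    (hr : ∀ s a, rmin ≤ r s a ∧ r s a ≤ rmax) (θ0 : Param S A P) (i : Fin N) (s : S)
    (p : ParAct A P i) (x : A i) :
    |Adv γ Ptr r P (bnPol P θ0) i s p x| ≤ (rmax - rmin) * (1 - γ)⁻¹ := by
  have h1 := QparPlus_bounds hDAG hγ0 hγ1 hPtr hr θ0 i s p x
  have h2 := Qpar_bounds hDAG hγ0 hγ1 hPtr hr θ0 i s p
  rw [abs_le]
  unfold Adv
  constructor <;> [skip; skip] <;> nlinarith [h1.1, h1.2, h2.1, h2.2]

/-- The policy gradient in advantage form. -/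
lemma gradV_adv (hDAG : IsDAG P) (hγ0 : 0 ≤ γ) (hγ1 : γ < 1) (hPtr : IsKernel Ptr)
    (hr : ∀ s a, rmin ≤ r s a ∧ r s a ≤ rmax) (hμ : IsDist μ)
    (θ0 : Param S A P) (i : Fin N) (sb : S) (p : ParAct A P i) (x : A i) :
    gradV γ Ptr r μ P θ0 i sb p x
      = dvisit γ Ptr (bnPol P θ0) μ sb * parentMarg P (bnPol P θ0) i sb p *
        locPol P θ0 i sb p x * Adv γ Ptr r P (bnPol P θ0) i sb p x := by
  rw [gradV_formula hDAG hγ0 hγ1 hPtr hr hμ θ0 i sb p x]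
  have hden := denPlus_pos hDAG θ0 i sb p x
  have hmarg := parentMarg_pos hDAG θ0 i sb p
  have hfac := den_factor hDAG θ0 i sb p x
  have hNumPlus : (∑ a, if restr A P i a = p ∧ a i = x
        then bnPol P θ0 sb a * Qa γ Ptr r (bnPol P θ0) sb a else 0)
      = QparPlus γ Ptr r P (bnPol P θ0) i sb p x *
        (parentMarg P (bnPol P θ0) i sb p * locPol P θ0 i sb p x) := by
    unfold QparPlus
    rw [← hfac]
    rw [div_mul_cancel₀ _ hden.ne']
  have hNum : (∑ a, if restr A P i a = p
        then bnPol P θ0 sb a * Qa γ Ptr r (bnPol P θ0) sb a else 0)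
      = Qpar γ Ptr r P (bnPol P θ0) i sb p * parentMarg P (bnPol P θ0) i sb p := by
    unfold Qpar
    rw [div_mul_cancel₀ _ hmarg.ne']
  rw [hNumPlus, hNum]
  unfold Adv
  ring

end Final


/-- Once overtaken, always overtaken (Lemma A.11): if at some time
`t ≥ T₁` (with `t > T₀`) a neutral action's probability drops to at most that of a
strictly improving action, it stays that way forever. -/
theorem once_overtaken_always_overtaken
    (P : Fin N → Finset (Fin N)) (hDAG : IsDAG P)
    (γ : ℝ) (hγ0 : 0 ≤ γ) (hγ1 : γ < 1)
    (Ptr : S → JointAct A → S → ℝ) (hPtr : IsKernel Ptr)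
    (r : S → JointAct A → ℝ) (rmin rmax : ℝ)
    (hr : ∀ s a, rmin ≤ r s a ∧ r s a ≤ rmax)
    (μ : S → ℝ) (hμ : IsDist μ)
    (η : ℝ) (hη : 0 < η) (hηle : η ≤ (1 - γ) ^ 3 / (8 * N * (rmax - rmin)))
    (θ : ℕ → Param S A P)
    (hdyn : ∀ t, θ (t + 1) = θ t + η • gradV γ Ptr r μ P (θ t))
    (πStar : (i : Fin N) → S → ParAct A P i → A i → ℝ)
    (hA3 : ∀ (i : Fin N) (s : S) (p : ParAct A P i) (ai : A i),
      Tendsto (fun t => locPol P (θ t) i s p ai) atTop (nhds (πStar i s p ai)))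
    (QplusInf : (i : Fin N) → S → ParAct A P i → A i → ℝ)
    (QmInf : (i : Fin N) → S → ParAct A P i → ℝ)
    (hQplus : ∀ (i : Fin N) (s : S) (p : ParAct A P i) (ai : A i),
      Tendsto (fun t => QparPlus γ Ptr r P (bnPol P (θ t)) i s p ai) atTop
        (nhds (QplusInf i s p ai)))
    (hQm : ∀ (i : Fin N) (s : S) (p : ParAct A P i),
      Tendsto (fun t => Qpar γ Ptr r P (bnPol P (θ t)) i s p) atTop (nhds (QmInf i s p)))
    (T0 : ℕ)
    (hT0 : ∀ t > T0, ∀ (i : Fin N) (s : S) (p : ParAct A P i) (ai : A i),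
      |QparPlus γ Ptr r P (bnPol P (θ t)) i s p ai - QplusInf i s p ai| ≤
        Delta P QplusInf QmInf / 4)
    (T1 : ℕ)
    (hT1 : ∀ t > T1, ∀ (i : Fin N) (s : S) (p : ParAct A P i) (ai : A i),
      (QplusInf i s p ai < QmInf i s p →
        Adv γ Ptr r P (bnPol P (θ t)) i s p ai < -(Delta P QplusInf QmInf) / 4) ∧
      (QmInf i s p < QplusInf i s p ai →
        Delta P QplusInf QmInf / 4 < Adv γ Ptr r P (bnPol P (θ t)) i s p ai))
    (i : Fin N) (s : S) (p : ParAct A P i)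
    (aplus : A i) (hplus : QmInf i s p < QplusInf i s p aplus)
    (a0 : A i) (h0 : QplusInf i s p a0 = QmInf i s p) :
    ∀ t : ℕ, T1 ≤ t → T0 < t →
      locPol P (θ t) i s p a0 ≤ locPol P (θ t) i s p aplus →
      ∀ τ : ℕ, t ≤ τ → locPol P (θ τ) i s p a0 ≤ locPol P (θ τ) i s p aplus := by
  intro t hT1t hT0t hstart
  -- Delta facts
  have hgapne : QplusInf i s p aplus - QmInf i s p ≠ 0 := ne_of_gt (sub_pos.2 hplus)
  have hmem : |QplusInf i s p aplus - QmInf i s p| ∈ {x : ℝ | ∃ (i' : Fin N) (s' : S)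
      (p' : ParAct A P i') (ai' : A i'), QplusInf i' s' p' ai' - QmInf i' s' p' ≠ 0 ∧
      x = |QplusInf i' s' p' ai' - QmInf i' s' p'|} := ⟨i, s, p, aplus, hgapne, rfl⟩
  have hbdd : BddBelow {x : ℝ | ∃ (i' : Fin N) (s' : S)
      (p' : ParAct A P i') (ai' : A i'), QplusInf i' s' p' ai' - QmInf i' s' p' ≠ 0 ∧
      x = |QplusInf i' s' p' ai' - QmInf i' s' p'|} := by
    refine ⟨0, fun x hx => ?_⟩
    obtain ⟨i', s', p', ai', _, rfl⟩ := hx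
    exact abs_nonneg _
  have hΔle : Delta P QplusInf QmInf ≤ QplusInf i s p aplus - QmInf i s p := by
    have := csInf_le hbdd hmem
    rwa [abs_of_pos (sub_pos.2 hplus)] at this
  have hΔ0 : 0 ≤ Delta P QplusInf QmInf := by
    refine le_csInf ⟨_, hmem⟩ (fun x hx => ?_)
    obtain ⟨i', s', p', ai', _, rfl⟩ := hx
    exact abs_nonneg _
  have h1γ : (0:ℝ) < 1 - γ := by linarith
  have hNpos : 0 < N := i.pos
  have hNR : (1:ℝ) ≤ (N:ℝ) := by exact_mod_cast hNpos
  -- rmin < rmax, else η ≤ 0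
  have hlt : rmin < rmax := by
    by_contra hle
    push_neg at hle
    have h8 : 8 * (N:ℝ) * (rmax - rmin) ≤ 0 :=
      mul_nonpos_of_nonneg_of_nonpos (by positivity) (by linarith)
    have hdiv : (1 - γ) ^ 3 / (8 * N * (rmax - rmin)) ≤ 0 := by
      rcases eq_or_lt_of_le h8 with heq | hlt8
      · rw [heq, div_zero]
      · exact le_of_lt (div_neg_of_pos_of_neg (by positivity) hlt8)
    linarith
  have hrr : (0:ℝ) < rmax - rmin := sub_pos.2 hlt
  -- coordinatewise dynamics
  have hstep : ∀ (τ : ℕ) (x : A i),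
      θ (τ + 1) i s p x = θ τ i s p x + η * gradV γ Ptr r μ P (θ τ) i s p x := by
    intro τ x
    rw [hdyn τ]
    rfl
  -- one-step preservation
  have main : ∀ τ : ℕ, t ≤ τ →
      locPol P (θ τ) i s p a0 ≤ locPol P (θ τ) i s p aplus →
      locPol P (θ (τ+1)) i s p a0 ≤ locPol P (θ (τ+1)) i s p aplus := by
    intro τ hτ ih
    have hτT0 : T0 < τ := lt_of_lt_of_le hT0t hτ
    have hθle : θ τ i s p a0 ≤ θ τ i s p aplus := (locPol_le_iff (θ τ) i s p a0 aplus).1 ih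
    have hπτ : IsPol (bnPol P (θ τ)) := bnPol_isPol hDAG (θ τ)
    -- advantage comparison from hT0
    have hT0a := abs_le.1 (hT0 τ hτT0 i s p a0)
    have hT0b := abs_le.1 (hT0 τ hτT0 i s p aplus)
    have hAdvle : Adv γ Ptr r P (bnPol P (θ τ)) i s p a0
        ≤ Adv γ Ptr r P (bnPol P (θ τ)) i s p aplus := by
      unfold Adv
      have h1 := hT0a.2
      have h2 := hT0b.1
      rw [h0] at h1
      linarith only [h1, h2, hΔle, hΔ0]
    have hg0 := gradV_adv (μ := μ) hDAG hγ0 hγ1 hPtr hr hμ (θ τ) i s p a0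
    have hgp := gradV_adv (μ := μ) hDAG hγ0 hγ1 hPtr hr hμ (θ τ) i s p aplus
    set d := dvisit γ Ptr (bnPol P (θ τ)) μ s with hd_def
    set m := parentMarg P (bnPol P (θ τ)) i s p with hm_def
    set L0 := locPol P (θ τ) i s p a0 with hL0_def
    set Lp := locPol P (θ τ) i s p aplus with hLp_def
    set A0 := Adv γ Ptr r P (bnPol P (θ τ)) i s p a0 with hA0_def
    set Ap := Adv γ Ptr r P (bnPol P (θ τ)) i s p aplus with hAp_def
    set δ := θ τ i s p aplus - θ τ i s p a0 with hδ_def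
    have hδ0 : 0 ≤ δ := sub_nonneg.2 hθle
    have hd0 : 0 ≤ d := dvisit_nonneg hγ0 hγ1 hPtr hπτ hμ s
    have hd1 : d ≤ (1 - γ)⁻¹ := dvisit_le hγ0 hγ1 hPtr hπτ hμ s
    have hm0 : 0 < m := parentMarg_pos hDAG (θ τ) i s p
    have hm1 : m ≤ 1 := parentMarg_le_one hDAG (θ τ) i s p
    have hL00 : 0 < L0 := locPol_pos (θ τ) i s p a0
    have hLp0 : 0 < Lp := locPol_pos (θ τ) i s p aplus
    have hLp1 : Lp ≤ 1 := locPol_le_one (θ τ) i s p aplus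
    have hApabs : |Ap| ≤ (rmax - rmin) * (1 - γ)⁻¹ :=
      Adv_abs_le hDAG hγ0 hγ1 hPtr hr (θ τ) i s p aplus
    -- ratio bound
    have hgapL : Lp - L0 ≤ Lp * δ := by
      have hratio : L0 = Lp * Real.exp (θ τ i s p a0 - θ τ i s p aplus) :=
        locPol_ratio (θ τ) i s p a0 aplus
      have hexp : 1 - δ ≤ Real.exp (-δ) := by
        have := Real.add_one_le_exp (-δ)
        linarith
      have hang : θ τ i s p a0 - θ τ i s p aplus = -δ := by rw [hδ_def]; ring
      rw [hang] at hratio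
      have hmul : Lp * (1 - δ) ≤ Lp * Real.exp (-δ) :=
        mul_le_mul_of_nonneg_left hexp hLp0.le
      calc Lp - L0 = Lp - Lp * Real.exp (-δ) := by rw [hratio]
        _ ≤ Lp - Lp * (1 - δ) := by linarith only [hmul]
        _ = Lp * δ := by ring
    -- gradient difference bound
    have hdm : 0 ≤ d * m := mul_nonneg hd0 hm0.le
    have hgdiff : gradV γ Ptr r μ P (θ τ) i s p a0 - gradV γ Ptr r μ P (θ τ) i s p aplus
        ≤ δ * (d * m * Lp * |Ap|) := by
      rw [hg0, hgp]
      have h1 : L0 * A0 ≤ L0 * Ap := mul_le_mul_of_nonneg_left hAdvle hL00.le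
      have h3 : -((Lp - L0) * Ap) ≤ (Lp - L0) * |Ap| := by
        have habs : -((Lp - L0) * Ap) ≤ |(Lp - L0) * Ap| := neg_le_abs _
        rwa [abs_mul, abs_of_nonneg (by linarith : (0:ℝ) ≤ Lp - L0)] at habs
      have h4 : (Lp - L0) * |Ap| ≤ Lp * δ * |Ap| :=
        mul_le_mul_of_nonneg_right hgapL (abs_nonneg _)
      have h2 : L0 * Ap - Lp * Ap = -((Lp - L0) * Ap) := by ring
      have hchain : L0 * A0 - Lp * Ap ≤ Lp * δ * |Ap| := by
        linarith only [h1, h2, h3, h4]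
      have h5 := mul_le_mul_of_nonneg_left hchain hdm
      have e1 : d * m * (L0 * A0 - Lp * Ap) = d * m * L0 * A0 - d * m * Lp * Ap := by ring
      have e2 : d * m * (Lp * δ * |Ap|) = δ * (d * m * Lp * |Ap|) := by ring
      linarith only [h5, e1, e2]
    -- step-size bound
    have hApnn : 0 ≤ |Ap| := abs_nonneg _
    have hs1 : d * m ≤ (1 - γ)⁻¹ :=
      le_trans (mul_le_of_le_one_right hd0 hm1) hd1
    have hs2 : d * m * Lp ≤ (1 - γ)⁻¹ :=
      le_trans (mul_le_of_le_one_right hdm hLp1) hs1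
    have hinv : (0:ℝ) ≤ (1 - γ)⁻¹ := inv_nonneg.2 h1γ.le
    have hdmbound : d * m * Lp * |Ap| ≤ (1 - γ)⁻¹ * ((rmax - rmin) * (1 - γ)⁻¹) :=
      mul_le_mul hs2 hApabs hApnn hinv
    have hkey : (1 - γ) ^ 3 / (8 * N * (rmax - rmin)) *
        ((1 - γ)⁻¹ * ((rmax - rmin) * (1 - γ)⁻¹)) = (1 - γ) / (8 * N) := by
      field_simp
    have hbound : η * (d * m * Lp * |Ap|) ≤ 1 := by
      have hfin : η * (d * m * Lp * |Ap|) ≤ (1 - γ) / (8 * N) := by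
        calc η * (d * m * Lp * |Ap|)
            ≤ η * ((1 - γ)⁻¹ * ((rmax - rmin) * (1 - γ)⁻¹)) :=
              mul_le_mul_of_nonneg_left hdmbound hη.le
          _ ≤ (1 - γ) ^ 3 / (8 * N * (rmax - rmin)) *
              ((1 - γ)⁻¹ * ((rmax - rmin) * (1 - γ)⁻¹)) :=
              mul_le_mul_of_nonneg_right hηle (by positivity)
          _ = (1 - γ) / (8 * N) := hkey
      have h81 : (1 - γ) / (8 * N) ≤ 1 := by
        rw [div_le_one (by positivity)]
        linarith only [hNR, hγ0]
      linarith only [hfin, h81]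
    -- conclude
    have hnew : θ (τ + 1) i s p a0 ≤ θ (τ + 1) i s p aplus := by
      rw [hstep τ a0, hstep τ aplus]
      have h5 : η * (gradV γ Ptr r μ P (θ τ) i s p a0 -
          gradV γ Ptr r μ P (θ τ) i s p aplus) ≤ η * (δ * (d * m * Lp * |Ap|)) :=
        mul_le_mul_of_nonneg_left hgdiff hη.le
      have h6 : η * (δ * (d * m * Lp * |Ap|)) = δ * (η * (d * m * Lp * |Ap|)) := by ring
      have h7 : δ * (η * (d * m * Lp * |Ap|)) ≤ δ * 1 :=
        mul_le_mul_of_nonneg_left hbound hδ0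
      have h8 : θ τ i s p aplus - θ τ i s p a0 = δ := rfl
      have h9 : δ * 1 = δ := mul_one δ
      have h10 : η * (gradV γ Ptr r μ P (θ τ) i s p a0 -
          gradV γ Ptr r μ P (θ τ) i s p aplus)
          = η * gradV γ Ptr r μ P (θ τ) i s p a0 -
            η * gradV γ Ptr r μ P (θ τ) i s p aplus := by ring
      linarith only [h5, h6, h7, h8, h9, h10]
    exact (locPol_le_iff (θ (τ + 1)) i s p a0 aplus).2 hnew
  intro τ hτ
  induction τ, hτ using Nat.le_induction with
  | base => exact hstart
  | succ n hn ihn => exact main n hn ihn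


end BNPG
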